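/- arXiv:2403.05934 — 3 statements merged into one kernel-verified Lean document; each statement's English description precedes it below -/
import Mathlib

section
/- Sufficient condition for trigonometric SoS membership: Let q be a real-valued trigonometric polynomial of bandwidth 2d on [0,1]^n that is strictly positive on [0,1]^n, with minimum q_min > 0 and mean value q₀. If ℓ is an integer with ℓ² ≥ 12 d² n · max{1, ‖q − q₀‖_F / q_min}, then q ∈ Σ_ℓ^𝒯. -/
noncomputable section

/-- The cube `[0,1]^m`. -/
def cube (m : ℕ) : Set (Fin m → ℝ) := Set.Icc 0 1

/-- Frequency grid `{-d,…,d}^m`. -/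
def grid (m d : ℕ) : Finset (Fin m → ℤ) :=
  Fintype.piFinset fun _ => Finset.Icc (-(d : ℤ)) (d : ℤ)

/-- Evaluation of a trigonometric polynomial of bandwidth `d` with coefficients `c`. -/
def trigEval (m d : ℕ) (c : (Fin m → ℤ) → ℂ) (x : Fin m → ℝ) : ℂ :=
  ∑ ω ∈ grid m d, c ω * Complex.exp (2 * (Real.pi : ℂ) * Complex.I * ∑ i, (ω i : ℂ) * (x i : ℂ))

/-- A real-valued trigonometric polynomial of bandwidth `d` on `[0,1]^m`. -/
def IsRealTrig (m d : ℕ) (f : (Fin m → ℝ) → ℝ) : Prop :=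
  ∃ c : (Fin m → ℤ) → ℂ, ∀ x, (f x : ℂ) = trigEval m d c x

/-- The truncated cone `Σ_ℓ^𝒯` of sums of squares of trigonometric polynomials of
bandwidth `ℓ`. -/
def SigmaT (m ℓ : ℕ) : Set ((Fin m → ℝ) → ℝ) :=
  {f | ∃ (s : ℕ) (g : Fin s → (Fin m → ℝ) → ℝ),
    (∀ i, IsRealTrig m ℓ (g i)) ∧ ∀ x, f x = ∑ i, g i x ^ 2}

/-- `‖q − q₀‖_F = Σ_{ω ≠ 0} |q_ω|` for a trigonometric polynomial with coefficients `c`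
on the grid `{-d,…,d}^m` and mean value `q₀ = c 0`. -/
def normFsub0 (m d : ℕ) (c : (Fin m → ℤ) → ℂ) : ℝ :=
  ∑ ω ∈ grid m d, if ω = 0 then 0 else ‖c ω‖

namespace Stmt3Aux

open Complex Finset

/-! ### Basic exponential lemmas -/

def ee (n : ℕ) (ω : Fin n → ℤ) (x : Fin n → ℝ) : ℂ :=
  Complex.exp (2 * (Real.pi : ℂ) * Complex.I * ∑ i, (ω i : ℂ) * (x i : ℂ))

lemma trigEval_eq (m d : ℕ) (c : (Fin m → ℤ) → ℂ) (x : Fin m → ℝ) :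
    trigEval m d c x = ∑ ω ∈ grid m d, c ω * ee m ω x := rfl

lemma ee_eq_exp_real (n : ℕ) (ω : Fin n → ℤ) (x : Fin n → ℝ) :
    ee n ω x = Complex.exp (((2 * Real.pi * ∑ i, (ω i : ℝ) * x i : ℝ) : ℂ) * Complex.I) := by
  unfold ee
  congr 1
  push_cast
  ring

lemma ee_abs (n : ℕ) (ω : Fin n → ℤ) (x : Fin n → ℝ) : ‖ee n ω x‖ = 1 := by
  rw [ee_eq_exp_real]; exact Complex.norm_exp_ofReal_mul_I _

lemma ee_zero (n : ℕ) (x : Fin n → ℝ) : ee n 0 x = 1 := by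
  unfold ee; simp

lemma ee_add (n : ℕ) (ω ω' : Fin n → ℤ) (x : Fin n → ℝ) :
    ee n (ω + ω') x = ee n ω x * ee n ω' x := by
  unfold ee
  rw [← Complex.exp_add]
  congr 1
  rw [← mul_add, ← Finset.sum_add_distrib]
  congr 1
  apply Finset.sum_congr rfl
  intro i _
  push_cast [Pi.add_apply]
  ring

lemma sum_neg_coef (n : ℕ) (ω : Fin n → ℤ) (x : Fin n → ℝ) :
    ∑ i, ((-ω) i : ℂ) * (x i : ℂ) = -∑ i, (ω i : ℂ) * (x i : ℂ) := by
  rw [← Finset.sum_neg_distrib]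
  apply Finset.sum_congr rfl
  intro i _
  push_cast [Pi.neg_apply]
  ring

lemma ee_conj (n : ℕ) (ω : Fin n → ℤ) (x : Fin n → ℝ) :
    (starRingEnd ℂ) (ee n ω x) = ee n (-ω) x := by
  unfold ee
  rw [← Complex.exp_conj, sum_neg_coef]
  congr 1
  simp only [map_mul, map_sum, Complex.conj_I, Complex.conj_ofReal, map_ofNat, map_intCast]
  ring

lemma ee_mul_conj (n : ℕ) (ω γ : Fin n → ℤ) (x : Fin n → ℝ) :
    ee n ω x * (starRingEnd ℂ) (ee n γ x) = ee n (ω - γ) x := by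
  rw [ee_conj, ← ee_add, sub_eq_add_neg]

/-! ### Discrete orthogonality -/

lemma sum_exp_orth (N : ℕ) (hN : 0 < N) (j : ℤ) (hj : j.natAbs < N) :
    ∑ k ∈ Finset.range N, Complex.exp (2 * (Real.pi : ℂ) * Complex.I * (j * k / N))
      = if j = 0 then (N : ℂ) else 0 := by
  by_cases h : j = 0
  · simp [h]
  · rw [if_neg h]
    set z : ℂ := Complex.exp (2 * (Real.pi : ℂ) * Complex.I * (j / N)) with hz
    have hterm : ∀ k ∈ Finset.range N,
        Complex.exp (2 * (Real.pi : ℂ) * Complex.I * (j * k / N)) = z ^ k := by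
      intro k _
      rw [hz, ← Complex.exp_nat_mul]
      congr 1
      ring
    rw [Finset.sum_congr rfl hterm]
    have hz1 : z ≠ 1 := by
      rw [hz, Ne, Complex.exp_eq_one_iff]
      rintro ⟨m, hm⟩
      have hNne : (N : ℂ) ≠ 0 := by exact_mod_cast hN.ne'
      have hpi : (2 * (Real.pi : ℂ) * Complex.I) ≠ 0 := by
        simp [Real.pi_ne_zero, Complex.I_ne_zero]
      have hj' : (j : ℂ) = m * N := by
        field_simp at hm
        have h3 : (2 * (Real.pi : ℂ) * Complex.I) * (j : ℂ)
            = (2 * (Real.pi : ℂ) * Complex.I) * ((m : ℂ) * N) := by linear_combination (2 * (Real.pi : ℂ) * Complex.I) * hm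
        exact mul_left_cancel₀ hpi h3
      have hj2 : j = m * N := by exact_mod_cast hj'
      have : (N : ℤ) ∣ j := ⟨m, by linarith [hj2]⟩
      rcases this with ⟨m', hm'⟩
      have habs : (N : ℤ) ≤ j.natAbs := by
        have hm'0 : m' ≠ 0 := by rintro rfl; simp at hm'; exact h hm'
        calc (N:ℤ) = N * 1 := by ring
        _ ≤ N * |m'| := by
            have : (1:ℤ) ≤ |m'| := Int.one_le_abs (by exact_mod_cast hm'0)
            exact mul_le_mul_of_nonneg_left this (by positivity)
        _ = |j| := by rw [hm', abs_mul, Int.abs_natCast]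
        _ = j.natAbs := by exact_mod_cast Int.abs_eq_natAbs j
      omega
    have hzN : z ^ N = 1 := by
      rw [hz, ← Complex.exp_nat_mul]
      have hNne : (N : ℂ) ≠ 0 := by exact_mod_cast hN.ne'
      rw [show (N:ℂ) * (2 * (Real.pi : ℂ) * Complex.I * (j / N))
          = (j:ℂ) * (2 * Real.pi * Complex.I) by field_simp]
      exact Complex.exp_int_mul_two_pi_mul_I j
    rw [geom_sum_eq hz1, hzN]
    simp

def pt (n N : ℕ) (k : Fin n → Fin N) : Fin n → ℝ := fun i => (k i : ℝ) / N

lemma ee_pt_prod (n N : ℕ) (ω : Fin n → ℤ) (k : Fin n → Fin N) :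
    ee n ω (pt n N k)
      = ∏ i, Complex.exp (2 * (Real.pi : ℂ) * Complex.I * (ω i * (k i : ℕ) / N)) := by
  rw [← Complex.exp_sum]
  unfold ee pt
  congr 1
  rw [Finset.mul_sum]
  apply Finset.sum_congr rfl
  intro i _
  push_cast
  ring

lemma sum_ee_pt (n N : ℕ) (hN : 0 < N) (ω : Fin n → ℤ) (hω : ∀ i, (ω i).natAbs < N) :
    ∑ k : Fin n → Fin N, ee n ω (pt n N k) = if ω = 0 then ((N : ℂ)) ^ n else 0 := by
  have h1 : ∑ k : Fin n → Fin N, ee n ω (pt n N k)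
      = ∏ i, ∑ j : Fin N, Complex.exp (2 * (Real.pi : ℂ) * Complex.I * (ω i * (j : ℕ) / N)) := by
    rw [Finset.prod_univ_sum]
    rw [Fintype.piFinset_univ]
    apply Finset.sum_congr rfl
    intro k _
    exact ee_pt_prod n N ω k
  rw [h1]
  have h2 : ∀ i, ∑ j : Fin N, Complex.exp (2 * (Real.pi : ℂ) * Complex.I * (ω i * (j : ℕ) / N))
      = if ω i = 0 then (N : ℂ) else 0 := by
    intro i
    rw [← sum_exp_orth N hN (ω i) (hω i)]
    rw [Fin.sum_univ_eq_sum_range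
      (fun j => Complex.exp (2 * (Real.pi : ℂ) * Complex.I * (ω i * (j : ℕ) / N)))]
  simp_rw [h2]
  by_cases h : ω = 0
  · simp [h]
  · rw [if_neg h]
    have : ∃ i, ω i ≠ 0 := by
      by_contra hc
      push_neg at hc
      exact h (funext hc)
    obtain ⟨i0, hi0⟩ := this
    exact Finset.prod_eq_zero (Finset.mem_univ i0) (by rw [if_neg hi0])

/-! ### Triangle kernel autocorrelation -/

def tt (ℓ : ℕ) (a : ℤ) : ℝ := (((ℓ : ℤ) - (a.natAbs : ℤ)).toNat : ℝ)

lemma tt_nonneg (ℓ : ℕ) (a : ℤ) : 0 ≤ tt ℓ a := Nat.cast_nonneg _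

lemma tt_even (ℓ : ℕ) (a : ℤ) : tt ℓ (-a) = tt ℓ a := by unfold tt; rw [Int.natAbs_neg]

lemma tt_eq_zero (ℓ : ℕ) (a : ℤ) (h : (ℓ : ℤ) ≤ (a.natAbs : ℤ)) : tt ℓ a = 0 := by
  unfold tt
  have : ((ℓ : ℤ) - (a.natAbs : ℤ)).toNat = 0 := by omega
  rw [this]; simp

lemma tt_eq_zero' (ℓ : ℕ) (a : ℤ) (h : a ∉ Finset.Icc (-(ℓ:ℤ)) ℓ) : tt ℓ a = 0 := by
  apply tt_eq_zero
  rw [Finset.mem_Icc] at h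
  omega

lemma sum_supp (ℓ : ℕ) (S : Finset ℤ) (hS : Finset.Icc (-(ℓ:ℤ)) ℓ ⊆ S) (f : ℤ → ℝ)
    (hf : ∀ a, a ∉ Finset.Icc (-(ℓ:ℤ)) ℓ → f a = 0) :
    ∑ a ∈ S, f a = ∑ a ∈ Finset.Icc (-(ℓ:ℤ)) ℓ, f a := by
  symm
  apply Finset.sum_subset hS
  intro a _ ha
  exact hf a ha

def A (ℓ : ℕ) (j : ℤ) : ℝ := ∑ a ∈ Finset.Icc (-(ℓ:ℤ)) ℓ, tt ℓ a * tt ℓ (a + j)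

lemma A_nonneg (ℓ : ℕ) (j : ℤ) : 0 ≤ A ℓ j :=
  Finset.sum_nonneg fun a _ => mul_nonneg (tt_nonneg _ _) (tt_nonneg _ _)

lemma A_eq_big (ℓ : ℕ) (j : ℤ) (S : Finset ℤ) (hS : Finset.Icc (-(ℓ:ℤ)) ℓ ⊆ S) :
    A ℓ j = ∑ a ∈ S, tt ℓ a * tt ℓ (a + j) := by
  rw [A, ← sum_supp ℓ S hS]
  intro a ha
  rw [tt_eq_zero' ℓ a ha, zero_mul]

lemma sum_Icc_neg (L : ℤ) (f : ℤ → ℝ) :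
    ∑ a ∈ Finset.Icc (-L) L, f (-a) = ∑ a ∈ Finset.Icc (-L) L, f a := by
  apply Finset.sum_nbij' (fun a => -a) (fun a => -a) <;>
    simp [Finset.mem_Icc] <;> omega

lemma sum_Icc_shift (u v c : ℤ) (f : ℤ → ℝ) :
    ∑ a ∈ Finset.Icc u v, f (a + c) = ∑ a ∈ Finset.Icc (u + c) (v + c), f a := by
  apply Finset.sum_nbij' (fun a => a + c) (fun a => a - c) <;>
    simp [Finset.mem_Icc] <;> omega

lemma A_even (ℓ : ℕ) (j : ℤ) : A ℓ (-j) = A ℓ j := by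
  set K : ℤ := (ℓ : ℤ) + |j| with hK
  have hsub : Finset.Icc (-(ℓ:ℤ)) ℓ ⊆ Finset.Icc (-K) K := by
    intro a ha; rw [Finset.mem_Icc] at *
    have := abs_nonneg j; omega
  rw [A_eq_big ℓ (-j) _ hsub, A_eq_big ℓ j _ hsub]
  rw [← sum_Icc_neg K (fun a => tt ℓ a * tt ℓ (a + -j))]
  apply Finset.sum_congr rfl
  intro a _
  rw [show -a + -j = -(a + j) by ring, tt_even, tt_even]

lemma A_conv (ℓ : ℕ) (j : ℤ) :
    ∑ a ∈ Finset.Icc (-(ℓ:ℤ)) ℓ, tt ℓ a * tt ℓ (j - a) = A ℓ j := by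
  set K : ℤ := (ℓ : ℤ) + |j| with hK
  have hsub : Finset.Icc (-(ℓ:ℤ)) ℓ ⊆ Finset.Icc (-K) K := by
    intro a ha; rw [Finset.mem_Icc] at *
    have := abs_nonneg j; omega
  rw [A_eq_big ℓ j _ hsub]
  rw [← sum_supp ℓ (Finset.Icc (-K) K) hsub (fun a => tt ℓ a * tt ℓ (j - a))
    (fun a ha => by rw [tt_eq_zero' ℓ a ha, zero_mul])]
  rw [← sum_Icc_neg K (fun a => tt ℓ a * tt ℓ (j - a))]
  apply Finset.sum_congr rfl
  intro a _
  rw [tt_even, show j - -a = a + j by ring]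

lemma sum_diff_one_sq (ℓ : ℕ) (S : Finset ℤ) :
    ∑ a ∈ S, (tt ℓ a - tt ℓ (a + 1)) ^ 2 ≤ 2 * ℓ := by
  set T : Finset ℤ := Finset.Icc (-(ℓ:ℤ)) ((ℓ:ℤ) - 1) with hT
  have hzero : ∀ a : ℤ, a ∉ T → (tt ℓ a - tt ℓ (a + 1)) ^ 2 = 0 := by
    intro a ha
    rw [hT, Finset.mem_Icc] at ha
    push_neg at ha
    rcases le_or_gt (-(ℓ:ℤ)) a with h1 | h1
    · have h2 := ha h1
      rw [tt_eq_zero ℓ a (by omega), tt_eq_zero ℓ (a+1) (by omega)]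
      ring
    · rw [tt_eq_zero ℓ a (by omega), tt_eq_zero ℓ (a+1) (by omega)]
      ring
  have hle : ∀ a : ℤ, (tt ℓ a - tt ℓ (a + 1)) ^ 2 ≤ 1 := by
    intro a
    unfold tt
    set x : ℕ := ((ℓ : ℤ) - ((a.natAbs : ℕ) : ℤ)).toNat with hx
    set y : ℕ := ((ℓ : ℤ) - (((a+1).natAbs : ℕ) : ℤ)).toNat with hy
    have hxy : x ≤ y + 1 ∧ y ≤ x + 1 := by
      constructor <;> (rw [hx, hy]; omega)
    have c1 : (x : ℝ) ≤ (y : ℝ) + 1 := by exact_mod_cast hxy.1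
    have c2 : (y : ℝ) ≤ (x : ℝ) + 1 := by exact_mod_cast hxy.2
    nlinarith [c1, c2]
  calc ∑ a ∈ S, (tt ℓ a - tt ℓ (a + 1)) ^ 2
      = ∑ a ∈ S ∩ T, (tt ℓ a - tt ℓ (a + 1)) ^ 2 := by
        symm
        apply Finset.sum_subset Finset.inter_subset_left
        intro a _ ha2
        by_cases hmem : a ∈ T
        · exact absurd (Finset.mem_inter.mpr ⟨‹a ∈ S›, hmem⟩) ha2
        · exact hzero a hmem
    _ ≤ ∑ _a ∈ S ∩ T, (1:ℝ) := Finset.sum_le_sum (fun a _ => hle a)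
    _ = ((S ∩ T).card : ℝ) := by simp
    _ ≤ (T.card : ℝ) := by
        exact_mod_cast Nat.cast_le.mpr (Finset.card_le_card Finset.inter_subset_right)
    _ ≤ 2 * ℓ := by
        rw [hT, Int.card_Icc]
        have : ((ℓ:ℤ) - 1 + 1 - -(ℓ:ℤ)).toNat = 2 * ℓ := by omega
        rw [this]
        push_cast
        exact le_refl _

lemma half_identity (ℓ : ℕ) (j : ℤ) :
    A ℓ 0 - A ℓ j =
      (1/2) * ∑ a ∈ Finset.Icc (-((ℓ:ℤ) + |j|)) ((ℓ:ℤ) + |j|), (tt ℓ a - tt ℓ (a + j)) ^ 2 := by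
  set K : ℤ := (ℓ : ℤ) + |j| with hK
  have habs := abs_nonneg j
  have habs2 := neg_abs_le j
  have habs3 := le_abs_self j
  have hsub : Finset.Icc (-(ℓ:ℤ)) ℓ ⊆ Finset.Icc (-K) K := by
    intro a ha; rw [Finset.mem_Icc] at *; omega
  have hA0 : A ℓ 0 = ∑ a ∈ Finset.Icc (-K) K, tt ℓ a ^ 2 := by
    rw [A_eq_big ℓ 0 _ hsub]
    apply Finset.sum_congr rfl
    intro a _
    rw [add_zero]; ring
  have hAj : A ℓ j = ∑ a ∈ Finset.Icc (-K) K, tt ℓ a * tt ℓ (a + j) := A_eq_big ℓ j _ hsub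
  have hshift : ∑ a ∈ Finset.Icc (-K) K, tt ℓ (a + j) ^ 2 = A ℓ 0 := by
    rw [sum_Icc_shift (-K) K j (fun b => tt ℓ b ^ 2)]
    rw [hA0]
    have hs1 : Finset.Icc (-(ℓ:ℤ)) ℓ ⊆ Finset.Icc (-K + j) (K + j) := by
      intro a ha; rw [Finset.mem_Icc] at *; omega
    rw [sum_supp ℓ _ hs1 (fun a => tt ℓ a ^ 2)
      (fun a ha => by rw [tt_eq_zero' ℓ a ha]; ring)]
    rw [sum_supp ℓ _ hsub (fun a => tt ℓ a ^ 2)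
      (fun a ha => by rw [tt_eq_zero' ℓ a ha]; ring)]
  have expand : ∑ a ∈ Finset.Icc (-K) K, (tt ℓ a - tt ℓ (a + j)) ^ 2
      = ∑ a ∈ Finset.Icc (-K) K,
          (tt ℓ a ^ 2 + tt ℓ (a + j) ^ 2 - 2 * (tt ℓ a * tt ℓ (a + j))) := by
    apply Finset.sum_congr rfl
    intro a _
    ring
  rw [expand]
  rw [Finset.sum_sub_distrib, Finset.sum_add_distrib, ← Finset.mul_sum]
  rw [← hA0, hshift, ← hAj]
  ring

lemma A_le_A0 (ℓ : ℕ) (j : ℤ) : A ℓ j ≤ A ℓ 0 := by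
  have h := half_identity ℓ j
  have h2 : (0:ℝ) ≤ ∑ a ∈ Finset.Icc (-((ℓ:ℤ) + |j|)) ((ℓ:ℤ) + |j|),
      (tt ℓ a - tt ℓ (a + j)) ^ 2 :=
    Finset.sum_nonneg fun a _ => sq_nonneg _
  linarith

lemma key_nat (ℓ m : ℕ) : A ℓ 0 - A ℓ (m : ℤ) ≤ (m:ℝ)^2 * ℓ := by
  have hm : |(m : ℤ)| = (m : ℤ) := by simp
  have hid := half_identity ℓ (m : ℤ)
  rw [hm] at hid
  set K : ℤ := (ℓ : ℤ) + m with hK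
  set S : Finset ℤ := Finset.Icc (-K) K with hS
  have step1 : ∀ a : ℤ, (tt ℓ a - tt ℓ (a + m)) ^ 2
      ≤ (m:ℝ) * ∑ i ∈ Finset.range m, (tt ℓ (a + i) - tt ℓ (a + i + 1)) ^ 2 := by
    intro a
    have htel : tt ℓ a - tt ℓ (a + m)
        = ∑ i ∈ Finset.range m, (tt ℓ (a + i) - tt ℓ (a + i + 1)) := by
      have := Finset.sum_range_sub' (fun i : ℕ => tt ℓ (a + i)) m
      simp only [Nat.cast_zero, add_zero] at this
      rw [← this]
      apply Finset.sum_congr rfl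
      intro i _
      congr 2
      push_cast
      ring
    rw [htel]
    have := sq_sum_le_card_mul_sum_sq
      (s := Finset.range m) (f := fun i => tt ℓ (a + i) - tt ℓ (a + i + 1))
    simpa using this
  have step2 : ∑ a ∈ S, (tt ℓ a - tt ℓ (a + m)) ^ 2
      ≤ (m:ℝ) * ∑ i ∈ Finset.range m, ∑ a ∈ S, (tt ℓ (a + i) - tt ℓ (a + i + 1)) ^ 2 := by
    calc ∑ a ∈ S, (tt ℓ a - tt ℓ (a + m)) ^ 2
        ≤ ∑ a ∈ S, (m:ℝ) * ∑ i ∈ Finset.range m, (tt ℓ (a + i) - tt ℓ (a + i + 1)) ^ 2 :=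
          Finset.sum_le_sum fun a _ => step1 a
      _ = (m:ℝ) * ∑ a ∈ S, ∑ i ∈ Finset.range m, (tt ℓ (a + i) - tt ℓ (a + i + 1)) ^ 2 := by
          rw [Finset.mul_sum]
      _ = (m:ℝ) * ∑ i ∈ Finset.range m, ∑ a ∈ S, (tt ℓ (a + i) - tt ℓ (a + i + 1)) ^ 2 := by
          rw [Finset.sum_comm]
  have step3 : ∀ i : ℕ, ∑ a ∈ S, (tt ℓ (a + i) - tt ℓ (a + i + 1)) ^ 2 ≤ 2 * ℓ := by
    intro i
    have := sum_Icc_shift (-K) K (i : ℤ) (fun b => (tt ℓ b - tt ℓ (b + 1)) ^ 2)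
    rw [hS]
    rw [this]
    exact sum_diff_one_sq ℓ _
  have step4 : ∑ a ∈ S, (tt ℓ a - tt ℓ (a + m)) ^ 2 ≤ (m:ℝ) * (m * (2 * ℓ)) := by
    refine le_trans step2 ?_
    apply mul_le_mul_of_nonneg_left _ (Nat.cast_nonneg m)
    calc ∑ i ∈ Finset.range m, ∑ a ∈ S, (tt ℓ (a + i) - tt ℓ (a + i + 1)) ^ 2
        ≤ ∑ _i ∈ Finset.range m, (2 * (ℓ:ℝ)) := Finset.sum_le_sum fun i _ => step3 i
      _ = (m:ℝ) * (2 * ℓ) := by simp [Finset.sum_const, mul_comm]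
  rw [hid]
  linarith [step4]

lemma key_bound (ℓ : ℕ) (j : ℤ) : A ℓ 0 - A ℓ j ≤ (j:ℝ)^2 * ℓ := by
  have h1 : A ℓ j = A ℓ (j.natAbs : ℤ) := by
    rcases Int.natAbs_eq j with h | h
    · rw [← h]
    · rw [← A_even, h]
      simp only [Int.natAbs_neg, Int.natAbs_natCast, neg_neg]
  have h2 : ((j:ℝ))^2 = ((j.natAbs : ℕ):ℝ)^2 := by
    rw [Nat.cast_natAbs, Int.cast_abs, _root_.sq_abs]
  rw [h1, h2]
  exact key_nat ℓ j.natAbs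

lemma sum_range_sq_formula (L : ℕ) :
    ∑ i ∈ Finset.range L, (i:ℝ)^2 = (L:ℝ) * ((L:ℝ) - 1) * (2*(L:ℝ) - 1) / 6 := by
  induction L with
  | zero => simp
  | succ L ih =>
    rw [Finset.sum_range_succ, ih]
    push_cast
    ring

lemma sum_Icc_to_range (L : ℕ) (f : ℤ → ℝ) :
    ∑ a ∈ Finset.Icc (-(L:ℤ)) L, f a = ∑ i ∈ Finset.range (2*L+1), f ((i:ℤ) - L) := by
  refine Finset.sum_nbij' (i := fun a : ℤ => (a + L).toNat) (j := fun i : ℕ => (i:ℤ) - L)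
    ?_ ?_ ?_ ?_ ?_
  · intro a ha; rw [Finset.mem_Icc] at ha; rw [Finset.mem_range]; omega
  · intro i hi; rw [Finset.mem_range] at hi; rw [Finset.mem_Icc]; omega
  · intro a ha; rw [Finset.mem_Icc] at ha; omega
  · intro i hi; rw [Finset.mem_range] at hi; omega
  · intro a ha; rw [Finset.mem_Icc] at ha; congr 1; omega

lemma A0_ge (ℓ : ℕ) : (2/3) * (ℓ:ℝ)^3 ≤ A ℓ 0 := by
  have hval : ∀ i ∈ Finset.range (2*ℓ+1),
      tt ℓ ((i:ℤ) - ℓ) * tt ℓ (((i:ℤ) - ℓ) + 0) = ((min i (2*ℓ - i) : ℕ) : ℝ)^2 := by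
    intro i hi
    rw [Finset.mem_range] at hi
    have : tt ℓ ((i:ℤ) - ℓ) = ((min i (2*ℓ - i) : ℕ) : ℝ) := by
      unfold tt
      congr 1
      omega
    rw [add_zero, this]
    ring
  have hA0 : A ℓ 0 = ∑ i ∈ Finset.range (2*ℓ+1), ((min i (2*ℓ - i) : ℕ) : ℝ)^2 := by
    rw [A, sum_Icc_to_range ℓ (fun a => tt ℓ a * tt ℓ (a + 0))]
    exact Finset.sum_congr rfl hval
  have hsplit : ∑ i ∈ Finset.range (2*ℓ+1), ((min i (2*ℓ - i) : ℕ) : ℝ)^2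
      = (∑ i ∈ Finset.range (ℓ+1), (i:ℝ)^2) + ∑ i ∈ Finset.range ℓ, (i:ℝ)^2 := by
    rw [Finset.range_eq_Ico, ← Finset.sum_Ico_consecutive _ (Nat.zero_le (ℓ+1)) (by omega)]
    congr 1
    · rw [← Finset.range_eq_Ico]
      apply Finset.sum_congr rfl
      intro i hi
      rw [Finset.mem_range] at hi
      have : min i (2*ℓ - i) = i := by omega
      rw [this]
    · rw [Finset.sum_Ico_eq_sum_range]
      have h21 : 2*ℓ+1 - (ℓ+1) = ℓ := by omega
      rw [h21]
      rw [← Finset.sum_range_reflect (fun i => (i:ℝ)^2) ℓ]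
      apply Finset.sum_congr rfl
      intro i hi
      rw [Finset.mem_range] at hi
      have : min (ℓ + 1 + i) (2*ℓ - (ℓ + 1 + i)) = ℓ - 1 - i := by omega
      rw [this]
  rw [hA0, hsplit, sum_range_sq_formula, sum_range_sq_formula]
  have h0 : (0:ℝ) ≤ (ℓ:ℝ) := Nat.cast_nonneg ℓ
  push_cast
  nlinarith [h0]

/-! ### Misc helpers -/

lemma prod_ge_one_sub_sum {ι : Type*} (s : Finset ι) (u : ι → ℝ)
    (h0 : ∀ i ∈ s, 0 ≤ u i) (h1 : ∀ i ∈ s, u i ≤ 1) :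
    1 - (∑ i ∈ s, (1 - u i)) ≤ ∏ i ∈ s, u i := by
  induction s using Finset.cons_induction with
  | empty => simp
  | cons a s ha ih =>
    rw [Finset.prod_cons, Finset.sum_cons]
    have hu0 := h0 a (Finset.mem_cons_self a s)
    have hu1 := h1 a (Finset.mem_cons_self a s)
    have ihs := ih (fun i hi => h0 i (Finset.mem_cons_of_mem hi))
      (fun i hi => h1 i (Finset.mem_cons_of_mem hi))
    have hsum0 : 0 ≤ ∑ i ∈ s, (1 - u i) :=
      Finset.sum_nonneg fun i hi => by have := h1 i (Finset.mem_cons_of_mem hi); linarith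
    nlinarith [mul_nonneg hu0 (by linarith : (0:ℝ) ≤ (∏ i ∈ s, u i) - (1 - ∑ i ∈ s, (1 - u i))),
      mul_nonneg hsum0 (by linarith : (0:ℝ) ≤ 1 - u a)]

lemma mem_grid_iff (m d : ℕ) (ω : Fin m → ℤ) :
    ω ∈ grid m d ↔ ∀ i, (ω i).natAbs ≤ d := by
  unfold grid
  rw [Fintype.mem_piFinset]
  constructor
  · intro h i
    have := h i
    rw [Finset.mem_Icc] at this
    omega
  · intro h i
    rw [Finset.mem_Icc]
    have := h i
    omega

lemma zero_mem_grid (m d : ℕ) : (0 : Fin m → ℤ) ∈ grid m d := by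
  rw [mem_grid_iff]
  intro i
  simp

lemma neg_mem_grid (m d : ℕ) (ω : Fin m → ℤ) (h : ω ∈ grid m d) : -ω ∈ grid m d := by
  rw [mem_grid_iff] at *
  intro i
  simpa using h i

lemma sum_grid_neg (m d : ℕ) (f : (Fin m → ℤ) → ℂ) :
    ∑ ω ∈ grid m d, f (-ω) = ∑ ω ∈ grid m d, f ω := by
  apply Finset.sum_nbij' (i := fun ω : Fin m → ℤ => -ω) (j := fun ω : Fin m → ℤ => -ω)
  · intro ω h; exact neg_mem_grid m d ω h
  · intro ω h; exact neg_mem_grid m d ω h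
  · intro ω _; simp
  · intro ω _; simp
  · intro ω _; rfl

lemma sum_grid_neg_real (m d : ℕ) (f : (Fin m → ℤ) → ℝ) :
    ∑ ω ∈ grid m d, f (-ω) = ∑ ω ∈ grid m d, f ω := by
  apply Finset.sum_nbij' (i := fun ω : Fin m → ℤ => -ω) (j := fun ω : Fin m → ℤ => -ω)
  · intro ω h; exact neg_mem_grid m d ω h
  · intro ω h; exact neg_mem_grid m d ω h
  · intro ω _; simp
  · intro ω _; simp
  · intro ω _; rfl

lemma const_isRealTrig (m ℓ : ℕ) (a : ℝ) : IsRealTrig m ℓ (fun _ => a) := by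
  refine ⟨fun ω => if ω = 0 then (a : ℂ) else 0, fun x => ?_⟩
  rw [trigEval_eq]
  rw [Finset.sum_eq_single (0 : Fin m → ℤ)]
  · simp [ee_zero]
  · intro ω _ hω
    rw [if_neg hω, zero_mul]
  · intro h
    exact absurd (zero_mem_grid m ℓ) h

end Stmt3Aux

set_option maxHeartbeats 4000000 in
open Stmt3Aux Complex Finset in
/-- Sufficient condition for trigonometric SoS membership: if `q` is a real-valued
trigonometric polynomial of bandwidth `2d` on `[0,1]^n`, strictly positive with minimum
`q_min > 0` and mean value `q₀`, and `ℓ² ≥ 12 d² n · max{1, ‖q − q₀‖_F / q_min}`,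
then `q ∈ Σ_ℓ^𝒯`. -/
theorem stmt3 (n d : ℕ) (q : (Fin n → ℝ) → ℝ) (c : (Fin n → ℤ) → ℂ)
    (hq : ∀ x, (q x : ℂ) = trigEval n (2 * d) c x)
    (qmin : ℝ) (hmin : IsLeast (q '' cube n) qmin) (hpos : 0 < qmin)
    (ℓ : ℕ)
    (hl : 12 * (d : ℝ) ^ 2 * n * max 1 (normFsub0 n (2 * d) c / qmin) ≤ (ℓ : ℝ) ^ 2) :
    q ∈ SigmaT n ℓ := by
  by_cases hdeg : d = 0 ∨ n = 0
  · -- degenerate case : q is constant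
    have hee1 : ∀ ω ∈ grid n (2*d), ∀ x : Fin n → ℝ, ee n ω x = 1 := by
      intro ω hω x
      rcases hdeg with h | h
      · subst h
        rw [mem_grid_iff] at hω
        have hω0 : ω = 0 := funext fun i => by
          have := hω i; simp only [Pi.zero_apply]; omega
        rw [hω0, ee_zero]
      · subst h
        unfold ee
        simp
    have hconst : ∀ x y, q x = q y := by
      intro x y
      have hx := hq x; have hy := hq y
      rw [trigEval_eq] at hx hy
      have hxy : (q x : ℂ) = (q y : ℂ) := by
        rw [hx, hy]
        apply Finset.sum_congr rfl
        intro ω hω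
        rw [hee1 ω hω x, hee1 ω hω y]
      exact_mod_cast hxy
    have h0cube : (0 : Fin n → ℝ) ∈ cube n := ⟨le_refl _, zero_le_one⟩
    have hq0 : qmin ≤ q 0 := hmin.2 ⟨0, h0cube, rfl⟩
    refine ⟨1, fun _ => fun _ => Real.sqrt (q 0), fun _ => const_isRealTrig n ℓ _, fun x => ?_⟩
    rw [Fin.sum_univ_one, Real.sq_sqrt (by linarith)]
    exact hconst x 0
  -- main case
  push_neg at hdeg
  obtain ⟨hd0, hn0⟩ := hdeg
  have hd1 : (1:ℝ) ≤ (d:ℝ) := by exact_mod_cast Nat.one_le_iff_ne_zero.mpr hd0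
  have hn1 : (1:ℝ) ≤ (n:ℝ) := by exact_mod_cast Nat.one_le_iff_ne_zero.mpr hn0
  set M : ℝ := max 1 (normFsub0 n (2 * d) c / qmin) with hM
  have hM1 : (1:ℝ) ≤ M := le_max_left _ _
  have hMpos : (0:ℝ) < M := lt_of_lt_of_le one_pos hM1
  have hl2 : 12 * (d:ℝ)^2 * n * M ≤ (ℓ:ℝ)^2 := hl
  have hl12 : (12:ℝ) ≤ (ℓ:ℝ)^2 := by
    have e1 : (12:ℝ) ≤ 12*(d:ℝ)^2 := by nlinarith
    have e2 : 12*(d:ℝ)^2 ≤ 12*(d:ℝ)^2*(n:ℝ) := by nlinarith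
    have e3 : 12*(d:ℝ)^2*(n:ℝ) ≤ 12*(d:ℝ)^2*(n:ℝ)*M := by nlinarith
    linarith
  have hlpos : 0 < ℓ := by
    rcases Nat.eq_zero_or_pos ℓ with h | h
    · exfalso; rw [h] at hl12; norm_num at hl12
    · exact h
  have hlR : (0:ℝ) < (ℓ:ℝ) := by exact_mod_cast hlpos
  have hdl : d ≤ ℓ := by
    by_contra h
    push_neg at h
    have hh : (ℓ:ℝ) < (d:ℝ) := by exact_mod_cast h
    have p1 : (ℓ:ℝ)^2 < (d:ℝ)^2 := by nlinarith
    have p2 : (d:ℝ)^2 ≤ 12*(d:ℝ)^2*(n:ℝ)*M := by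
      have q1 : 12*(d:ℝ)^2 ≤ 12*(d:ℝ)^2*(n:ℝ) := by nlinarith
      have q2 : 12*(d:ℝ)^2*(n:ℝ) ≤ 12*(d:ℝ)^2*(n:ℝ)*M := by nlinarith
      have q3 : (d:ℝ)^2 ≤ 12*(d:ℝ)^2 := by nlinarith
      linarith
    linarith
  -- symmetrized coefficients
  set ch : (Fin n → ℤ) → ℂ := fun ω => (c ω + (starRingEnd ℂ) (c (-ω))) / 2 with hchdef
  have hch : ∀ ω, ch ω = (c ω + (starRingEnd ℂ) (c (-ω))) / 2 := fun _ => rfl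
  have hqhat : ∀ x, (q x : ℂ) = ∑ ω ∈ grid n (2*d), ch ω * ee n ω x := by
    intro x
    have h1 : (q x : ℂ) = ∑ ω ∈ grid n (2*d), c ω * ee n ω x := by rw [hq x, trigEval_eq]
    have h2 : (q x : ℂ) = ∑ ω ∈ grid n (2*d), (starRingEnd ℂ) (c (-ω)) * ee n ω x := by
      have hc1 : (q x : ℂ) = (starRingEnd ℂ) ((q x : ℝ) : ℂ) := (Complex.conj_ofReal _).symm
      rw [hc1, h1, map_sum]
      rw [← sum_grid_neg n (2*d) (fun ω => (starRingEnd ℂ) (c (-ω)) * ee n ω x)]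
      apply Finset.sum_congr rfl
      intro ω _
      rw [map_mul, ee_conj]
      simp only [neg_neg]
    have h3 : ∑ ω ∈ grid n (2*d), ch ω * ee n ω x
        = ((∑ ω ∈ grid n (2*d), c ω * ee n ω x)
          + ∑ ω ∈ grid n (2*d), (starRingEnd ℂ) (c (-ω)) * ee n ω x) / 2 := by
      rw [← Finset.sum_add_distrib, Finset.sum_div]
      apply Finset.sum_congr rfl
      intro ω _
      rw [hch]
      ring
    rw [h3, ← h1, ← h2]
    ring
  have hchsymm : ∀ ω, ch (-ω) = (starRingEnd ℂ) (ch ω) := by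
    intro ω
    rw [hch, hch]
    simp only [neg_neg, map_div₀, map_add, Complex.conj_conj, map_ofNat]
    ring
  -- F-norm control
  set SF : ℝ := ∑ ω ∈ grid n (2*d), (if ω = 0 then 0 else ‖ch ω‖) with hSFdef
  have hSFle : SF ≤ normFsub0 n (2*d) c := by
    have hnegsum : ∑ ω ∈ grid n (2*d), (if ω = 0 then 0 else ‖c (-ω)‖)
        = normFsub0 n (2*d) c := by
      rw [normFsub0]
      rw [← sum_grid_neg_real n (2*d) (fun ω => if ω = 0 then 0 else ‖c ω‖)]
      apply Finset.sum_congr rfl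
      intro ω _
      simp only [neg_eq_zero]
    have hstep : SF ≤ ∑ ω ∈ grid n (2*d),
        (((if ω = 0 then 0 else ‖c ω‖)
          + (if ω = 0 then 0 else ‖c (-ω)‖))/2) := by
      rw [hSFdef]
      apply Finset.sum_le_sum
      intro ω _
      by_cases h : ω = 0
      · simp [h]
      · rw [if_neg h, if_neg h, if_neg h, hch]
        have habs := norm_add_le (c ω) ((starRingEnd ℂ) (c (-ω)))
        rw [Complex.norm_conj] at habs
        have h2 : ‖(c ω + (starRingEnd ℂ) (c (-ω))) / 2‖
            = ‖c ω + (starRingEnd ℂ) (c (-ω))‖ / 2 := by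
          rw [norm_div]
          norm_num
        rw [h2]
        linarith
    have hfin : ∑ ω ∈ grid n (2*d),
        (((if ω = 0 then 0 else ‖c ω‖)
          + (if ω = 0 then 0 else ‖c (-ω)‖))/2)
        = normFsub0 n (2*d) c := by
      rw [← Finset.sum_div, Finset.sum_add_distrib, hnegsum]
      rw [show ∑ ω ∈ grid n (2*d), (if ω = 0 then 0 else ‖c ω‖)
          = normFsub0 n (2*d) c from rfl]
      ring
    linarith
  have hFM : normFsub0 n (2*d) c ≤ M * qmin := by
    have hh := le_max_right (1:ℝ) (normFsub0 n (2 * d) c / qmin)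
    have := (div_le_iff₀ hpos).mp hh
    calc normFsub0 n (2*d) c ≤ max 1 (normFsub0 n (2 * d) c / qmin) * qmin := this
      _ = M * qmin := by rw [hM]
  have hSFM : SF ≤ M * qmin := le_trans hSFle hFM
  -- kernel bounds
  have h23 : (0:ℝ) < (2/3) * (ℓ:ℝ)^3 := by positivity
  have hA0pos : 0 < A ℓ 0 := lt_of_lt_of_le h23 (A0_ge ℓ)
  set A0 : ℝ := A ℓ 0 with hA0def
  set KK : (Fin n → ℤ) → ℝ := fun ω => ∏ i, A ℓ (ω i) with hKKdef
  have hKKeq : ∀ ω, KK ω = ∏ i, A ℓ (ω i) := fun _ => rfl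
  set r : (Fin n → ℤ) → ℝ := fun ω => A0^n / KK ω with hrdef
  have hreq : ∀ ω, r ω = A0^n / KK ω := fun _ => rfl
  have hApow : (0:ℝ) < A0^n := pow_pos hA0pos n
  set E : ℝ := 6*(d:ℝ)^2/(ℓ:ℝ)^2 with hEdef
  have hEnn : (0:ℝ) ≤ E := by rw [hEdef]; positivity
  have hnE : (n:ℝ) * E ≤ 1/(2*M) := by
    rw [hEdef]
    rw [show (n:ℝ) * (6*(d:ℝ)^2/(ℓ:ℝ)^2) = (6*(n:ℝ)*(d:ℝ)^2)/(ℓ:ℝ)^2 by ring]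
    rw [div_le_div_iff₀ (by positivity) (by positivity)]
    nlinarith [hl2]
  have hcoord : ∀ j : ℤ, j.natAbs ≤ 2*d → 1 - E ≤ A ℓ j / A0 := by
    intro j hj
    have hj2 : ((j : ℝ))^2 ≤ (2*(d:ℝ))^2 := by
      have h1 : |(j:ℝ)| ≤ 2*(d:ℝ) := by
        rw [← Int.cast_abs]
        have : |j| ≤ ((2*d : ℕ) : ℤ) := by rw [Int.abs_eq_natAbs]; omega
        exact_mod_cast this
      nlinarith [abs_nonneg ((j:ℝ)), _root_.sq_abs ((j:ℝ))]
    have hkb := key_bound ℓ j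
    have h4 : A0 - A ℓ j ≤ E * A0 := by
      have hEval : E * ((2/3)*(ℓ:ℝ)^3) = 4*(d:ℝ)^2*(ℓ:ℝ) := by
        rw [hEdef]; field_simp; ring
      have s1 : A0 - A ℓ j ≤ 4*(d:ℝ)^2*(ℓ:ℝ) := by nlinarith [hkb, hj2, hlR]
      have s3 : E * ((2/3)*(ℓ:ℝ)^3) ≤ E * A0 := mul_le_mul_of_nonneg_left (A0_ge ℓ) hEnn
      linarith
    have h5 : (A0 - A ℓ j)/A0 ≤ E := by
      rw [div_le_iff₀ hA0pos]
      linarith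
    have h6 : 1 - A ℓ j/A0 = (A0 - A ℓ j)/A0 := by
      field_simp
    linarith
  have hKKhalf : ∀ ω ∈ grid n (2*d), 1 - 1/(2*M) ≤ KK ω / A0^n := by
    intro ω hω
    have hu0 : ∀ i : Fin n, 0 ≤ A ℓ (ω i)/A0 := fun i => div_nonneg (A_nonneg _ _) hA0pos.le
    have hu1 : ∀ i : Fin n, A ℓ (ω i)/A0 ≤ 1 := fun i => (div_le_one hA0pos).mpr (A_le_A0 _ _)
    have hprod : KK ω / A0^n = ∏ i, (A ℓ (ω i)/A0) := by
      rw [hKKeq, Finset.prod_div_distrib, Finset.prod_const, Finset.card_univ,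
        Fintype.card_fin]
    have hge := prod_ge_one_sub_sum Finset.univ (fun i : Fin n => A ℓ (ω i)/A0)
      (fun i _ => hu0 i) (fun i _ => hu1 i)
    have hsum : ∑ i : Fin n, (1 - A ℓ (ω i)/A0) ≤ (n:ℝ) * E := by
      calc ∑ i : Fin n, (1 - A ℓ (ω i)/A0) ≤ ∑ _i : Fin n, E := by
            apply Finset.sum_le_sum
            intro i _
            have := hcoord (ω i) ((mem_grid_iff n (2*d) ω).mp hω i)
            linarith
        _ = (n:ℝ) * E := by
            rw [Finset.sum_const, Finset.card_univ, Fintype.card_fin, nsmul_eq_mul]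
    rw [hprod]
    calc 1 - 1/(2*M) ≤ 1 - (n:ℝ)*E := by linarith [hnE]
      _ ≤ 1 - ∑ i : Fin n, (1 - A ℓ (ω i)/A0) := by linarith [hsum]
      _ ≤ ∏ i, (A ℓ (ω i)/A0) := hge
  have hhalfM : 1/(2*M) ≤ (1:ℝ)/2 := by
    apply div_le_div_of_nonneg_left one_pos.le (by norm_num)
    linarith
  have hKKpos : ∀ ω ∈ grid n (2*d), 0 < KK ω := by
    intro ω hω
    have h1 := hKKhalf ω hω
    have h2 : (1:ℝ)/2 ≤ KK ω / A0^n := by linarith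
    have h3 := (le_div_iff₀ hApow).mp h2
    nlinarith [hApow]
  have hKKleA0 : ∀ ω : Fin n → ℤ, KK ω ≤ A0^n := by
    intro ω
    rw [hKKeq]
    calc ∏ i, A ℓ (ω i) ≤ ∏ _i : Fin n, A0 :=
        Finset.prod_le_prod (fun i _ => A_nonneg ℓ _) (fun i _ => A_le_A0 ℓ _)
      _ = A0^n := by rw [Finset.prod_const, Finset.card_univ, Fintype.card_fin]
  have hr1 : ∀ ω ∈ grid n (2*d), 1 ≤ r ω := by
    intro ω hω
    rw [hreq, le_div_iff₀ (hKKpos ω hω), one_mul]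
    exact hKKleA0 ω
  have hrle : ∀ ω ∈ grid n (2*d), r ω ≤ 1 + 1/M := by
    intro ω hω
    rw [hreq, div_le_iff₀ (hKKpos ω hω)]
    have h1 := hKKhalf ω hω
    have h2 : (1 - 1/(2*M)) * A0^n ≤ KK ω := (le_div_iff₀ hApow).mp h1
    have h3 : (1:ℝ) ≤ (1 + 1/M) * (1 - 1/(2*M)) := by
      have hkey : (1 + 1/M) * (1 - 1/(2*M)) - 1 = (M-1)/(2*M^2) := by
        field_simp
        ring
      have : (0:ℝ) ≤ (M-1)/(2*M^2) := by
        apply div_nonneg (by linarith) (by positivity)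
      linarith [hkey, this]
    have h4 : (0:ℝ) ≤ 1 + 1/M := by positivity
    nlinarith [mul_le_mul_of_nonneg_left h2 h4, h3, hApow]
  have hrneg : ∀ ω : Fin n → ℤ, r (-ω) = r ω := by
    intro ω
    rw [hreq, hreq]
    congr 1
    rw [hKKeq, hKKeq]
    apply Finset.prod_congr rfl
    intro i _
    rw [Pi.neg_apply, A_even]
  have hr0 : r 0 = 1 := by
    rw [hreq]
    have : KK 0 = A0^n := by
      rw [hKKeq]
      have : ∀ i : Fin n, A ℓ ((0 : Fin n → ℤ) i) = A0 := fun i => by rw [Pi.zero_apply, hA0def]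
      rw [Finset.prod_congr rfl (fun i _ => this i), Finset.prod_const, Finset.card_univ,
        Fintype.card_fin]
    rw [this, div_self (ne_of_gt hApow)]
  -- sampling grid
  set N : ℕ := 2*d + 2*ℓ + 1 with hNdef
  have hNpos : 0 < N := by omega
  have hptcube : ∀ k : Fin n → Fin N, pt n N k ∈ cube n := by
    intro k
    constructor
    · intro i
      exact div_nonneg (Nat.cast_nonneg _) (Nat.cast_nonneg _)
    · intro i
      have hki : ((k i : ℕ) : ℝ) ≤ (N:ℝ) := by
        exact_mod_cast le_of_lt (k i).isLt
      have hNR : (0:ℝ) < (N:ℝ) := by exact_mod_cast hNpos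
      calc pt n N k i = (k i : ℕ) / (N:ℝ) := rfl
        _ ≤ 1 := by rw [div_le_one hNR]; exact hki
  have hqk : ∀ k : Fin n → Fin N, qmin ≤ q (pt n N k) :=
    fun k => hmin.2 ⟨pt n N k, hptcube k, rfl⟩
  -- the positive sample weights
  set ph : (Fin n → ℤ) → ℂ := fun ω => ch ω * ((r ω : ℝ) : ℂ) with hphdef
  have hph : ∀ ω, ph ω = ch ω * ((r ω : ℝ) : ℂ) := fun _ => rfl
  set P : (Fin n → Fin N) → ℂ := fun k => ∑ ω ∈ grid n (2*d), ph ω * ee n ω (pt n N k)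
    with hPdef
  have hP : ∀ k, P k = ∑ ω ∈ grid n (2*d), ph ω * ee n ω (pt n N k) := fun _ => rfl
  have hPreal : ∀ k, (((P k).re : ℝ) : ℂ) = P k := by
    intro k
    rw [← Complex.conj_eq_iff_re, hP, map_sum]
    rw [← sum_grid_neg n (2*d) (fun ω => ph ω * ee n ω (pt n N k))]
    apply Finset.sum_congr rfl
    intro ω _
    rw [map_mul, ee_conj]
    congr 1
    rw [hph, hph, map_mul, ← hchsymm ω, Complex.conj_ofReal, hrneg]
  set pr : (Fin n → Fin N) → ℝ := fun k => (P k).re with hprdef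
  have hprc : ∀ k, ((pr k : ℝ) : ℂ) = P k := fun k => hPreal k
  have hprpos : ∀ k, 0 ≤ pr k := by
    intro k
    have hdiff : P k - ((q (pt n N k) : ℝ) : ℂ)
        = ∑ ω ∈ grid n (2*d), ch ω * (((r ω - 1 : ℝ)) : ℂ) * ee n ω (pt n N k) := by
      rw [hP, hqhat (pt n N k), ← Finset.sum_sub_distrib]
      apply Finset.sum_congr rfl
      intro ω _
      rw [hph]
      push_cast
      ring
    have habs : ‖P k - ((q (pt n N k):ℝ):ℂ)‖ ≤ SF * (1/M) := by
      rw [hdiff]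
      calc ‖∑ ω ∈ grid n (2*d), ch ω * (((r ω - 1 : ℝ)) : ℂ) * ee n ω (pt n N k)‖
          ≤ ∑ ω ∈ grid n (2*d),
              ‖ch ω * (((r ω - 1 : ℝ)) : ℂ) * ee n ω (pt n N k)‖ :=
            norm_sum_le _ _
        _ ≤ ∑ ω ∈ grid n (2*d), (if ω = 0 then 0 else ‖ch ω‖) * (1/M) := by
            apply Finset.sum_le_sum
            intro ω hω
            rw [norm_mul, norm_mul, ee_abs, mul_one]
            by_cases h : ω = 0
            · subst h
              rw [if_pos rfl, hr0]
              simp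
            · rw [if_neg h]
              apply mul_le_mul_of_nonneg_left _ (norm_nonneg _)
              rw [Complex.norm_real, Real.norm_eq_abs, _root_.abs_of_nonneg (by linarith [hr1 ω hω])]
              linarith [hrle ω hω]
        _ = SF * (1/M) := by rw [hSFdef, ← Finset.sum_mul]
    have hSF1M : SF * (1/M) ≤ qmin := by
      rw [mul_one_div, div_le_iff₀ hMpos]
      linarith [hSFM]
    have hre1 : pr k = q (pt n N k) + (P k - ((q (pt n N k):ℝ):ℂ)).re := by
      have : (P k - ((q (pt n N k):ℝ):ℂ)).re = (P k).re - q (pt n N k) := by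
        rw [Complex.sub_re, Complex.ofReal_re]
      rw [this]
      ring
    have hge : -(‖P k - ((q (pt n N k):ℝ):ℂ)‖)
        ≤ (P k - ((q (pt n N k):ℝ):ℂ)).re := by
      have h1 := Complex.abs_re_le_norm (P k - ((q (pt n N k):ℝ):ℂ))
      have h2 := neg_abs_le ((P k - ((q (pt n N k):ℝ):ℂ)).re)
      linarith
    rw [hre1]
    linarith [hqk k, habs, hSF1M, hge]
  -- the kernel factors
  set T : (Fin n → ℤ) → ℝ := fun α => ∏ i, tt ℓ (α i) with hTdef
  have hT : ∀ α, T α = ∏ i, tt ℓ (α i) := fun _ => rfl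
  have hTeven : ∀ α, T (-α) = T α := by
    intro α
    rw [hT, hT]
    apply Finset.prod_congr rfl
    intro i _
    rw [Pi.neg_apply, tt_even]
  set bco : (Fin n → Fin N) → (Fin n → ℤ) → ℂ :=
    fun k α => ((T α : ℝ) : ℂ) * (starRingEnd ℂ) (ee n α (pt n N k)) with hbcodef
  have hbco : ∀ k α, bco k α = ((T α : ℝ) : ℂ) * (starRingEnd ℂ) (ee n α (pt n N k)) :=
    fun _ _ => rfl
  set W : (Fin n → Fin N) → (Fin n → ℝ) → ℂ :=
    fun k x => ∑ α ∈ grid n ℓ, bco k α * ee n α x with hWdef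
  have hW : ∀ k x, W k x = ∑ α ∈ grid n ℓ, bco k α * ee n α x := fun _ _ => rfl
  have hWreal : ∀ k x, (((W k x).re : ℝ) : ℂ) = W k x := by
    intro k x
    rw [← Complex.conj_eq_iff_re, hW, map_sum]
    rw [← sum_grid_neg n ℓ (fun α => bco k α * ee n α x)]
    apply Finset.sum_congr rfl
    intro α _
    rw [map_mul, ee_conj]
    congr 1
    rw [hbco, hbco, map_mul, Complex.conj_conj, Complex.conj_ofReal, hTeven, ee_conj, neg_neg]
  -- main algebraic identity
  have hmain : ∀ x, ∑ k : Fin n → Fin N, P k * (W k x)^2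
      = ((N:ℂ))^n * (((A0^n : ℝ)) : ℂ) * ((q x : ℝ) : ℂ) := by
    intro x
    have hWsq : ∀ k, (W k x)^2 = ∑ α ∈ grid n ℓ, ∑ β ∈ grid n ℓ,
        ((T α * T β : ℝ) : ℂ) * (starRingEnd ℂ) (ee n (α + β) (pt n N k))
          * ee n (α + β) x := by
      intro k
      rw [hW, sq, Finset.sum_mul_sum]
      apply Finset.sum_congr rfl
      intro α _
      apply Finset.sum_congr rfl
      intro β _
      rw [hbco, hbco, ee_add, ee_add, map_mul]
      push_cast
      ring
    have hPW : ∀ k, P k * (W k x)^2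
        = ∑ ω ∈ grid n (2*d), ∑ α ∈ grid n ℓ, ∑ β ∈ grid n ℓ,
            (ph ω * ((T α * T β : ℝ):ℂ) * ee n (α+β) x) * ee n (ω - (α+β)) (pt n N k) := by
      intro k
      rw [hWsq k, hP, Finset.sum_mul]
      apply Finset.sum_congr rfl
      intro ω _
      rw [Finset.mul_sum]
      apply Finset.sum_congr rfl
      intro α _
      rw [Finset.mul_sum]
      apply Finset.sum_congr rfl
      intro β _
      rw [← ee_mul_conj n ω (α+β) (pt n N k)]
      ring
    have hsumk : ∑ k : Fin n → Fin N, P k * (W k x)^2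
        = ∑ ω ∈ grid n (2*d), ∑ α ∈ grid n ℓ, ∑ β ∈ grid n ℓ,
            (ph ω * ((T α * T β : ℝ):ℂ) * ee n (α+β) x)
              * (if ω - (α+β) = 0 then ((N:ℂ))^n else 0) := by
      rw [Finset.sum_congr rfl (fun k _ => hPW k)]
      rw [Finset.sum_comm]
      apply Finset.sum_congr rfl
      intro ω hω
      rw [Finset.sum_comm]
      apply Finset.sum_congr rfl
      intro α hα
      rw [Finset.sum_comm]
      apply Finset.sum_congr rfl
      intro β hβ
      rw [← Finset.mul_sum]
      congr 1
      apply sum_ee_pt n N hNpos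
      intro i
      have h1 := (mem_grid_iff n (2*d) ω).mp hω i
      have h2 := (mem_grid_iff n ℓ α).mp hα i
      have h3 := (mem_grid_iff n ℓ β).mp hβ i
      have h4 : (ω - (α+β)) i = ω i - (α i + β i) := by
        rw [Pi.sub_apply, Pi.add_apply]
      rw [h4]
      omega
    rw [hsumk]
    have hinner : ∀ ω ∈ grid n (2*d),
        (∑ α ∈ grid n ℓ, ∑ β ∈ grid n ℓ,
          (ph ω * ((T α * T β : ℝ):ℂ) * ee n (α+β) x)
            * (if ω - (α+β) = 0 then ((N:ℂ))^n else 0))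
        = ((N:ℂ))^n * (((A0^n : ℝ)):ℂ) * (ch ω * ee n ω x) := by
      intro ω hω
      have hco : ∀ α ∈ grid n ℓ, ∀ β ∈ grid n ℓ,
          (ph ω * ((T α * T β : ℝ):ℂ) * ee n (α+β) x)
            * (if ω - (α+β) = 0 then ((N:ℂ))^n else 0)
          = if β = ω - α then (ph ω * ((T α * T β:ℝ):ℂ) * ee n ω x) * ((N:ℂ))^n else 0 := by
        intro α _ β _
        by_cases h : β = ω - α
        · have h2 : α + β = ω := by rw [h]; ring
          rw [if_pos h, h2, sub_self, if_pos rfl]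
        · have h2 : ¬(ω - (α+β) = 0) := by
            intro hc
            apply h
            have : ω = α + β := by linear_combination hc
            rw [this]
            ring
          rw [if_neg h, if_neg h2, mul_zero]
      rw [Finset.sum_congr rfl (fun α hα => Finset.sum_congr rfl (fun β hβ => hco α hα β hβ))]
      have h6 : ∀ α : Fin n → ℤ,
          (∑ β ∈ grid n ℓ, if β = ω - α
            then (ph ω * ((T α * T β:ℝ):ℂ) * ee n ω x) * ((N:ℂ))^n else 0)
          = (ph ω * ((T α * T (ω - α):ℝ):ℂ) * ee n ω x) * ((N:ℂ))^n := by
        intro α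
        rw [Finset.sum_ite_eq' (grid n ℓ) (ω - α)
          (fun β => (ph ω * ((T α * T β:ℝ):ℂ) * ee n ω x) * ((N:ℂ))^n)]
        by_cases h : ω - α ∈ grid n ℓ
        · rw [if_pos h]
        · rw [if_neg h]
          have hT0 : T (ω - α) = 0 := by
            rw [hT]
            rw [mem_grid_iff] at h
            push_neg at h
            obtain ⟨i0, hi0⟩ := h
            exact Finset.prod_eq_zero (Finset.mem_univ i0) (tt_eq_zero ℓ _ (by omega))
          rw [hT0]
          push_cast
          ring
      rw [Finset.sum_congr rfl (fun α _ => h6 α)]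
      have h7 : ∑ α ∈ grid n ℓ, T α * T (ω - α) = KK ω := by
        rw [hKKeq]
        have hsummand : ∀ α : Fin n → ℤ,
            T α * T (ω - α) = ∏ i, (tt ℓ (α i) * tt ℓ (ω i - α i)) := by
          intro α
          rw [hT, hT, ← Finset.prod_mul_distrib]
          apply Finset.prod_congr rfl
          intro i _
          rw [Pi.sub_apply]
        rw [Finset.sum_congr rfl (fun α _ => hsummand α)]
        have hswap : (∑ α ∈ Fintype.piFinset (fun _ : Fin n => Finset.Icc (-(ℓ:ℤ)) (ℓ:ℤ)),
              ∏ i, (tt ℓ (α i) * tt ℓ (ω i - α i)))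
            = ∏ i, ∑ a ∈ Finset.Icc (-(ℓ:ℤ)) (ℓ:ℤ), (tt ℓ a * tt ℓ (ω i - a)) :=
          (Finset.prod_univ_sum (fun _ : Fin n => Finset.Icc (-(ℓ:ℤ)) (ℓ:ℤ))
            (fun i a => tt ℓ a * tt ℓ (ω i - a))).symm
        rw [show grid n ℓ = Fintype.piFinset (fun _ : Fin n => Finset.Icc (-(ℓ:ℤ)) (ℓ:ℤ))
          from rfl, hswap]
        apply Finset.prod_congr rfl
        intro i _
        exact A_conv ℓ (ω i)
      calc ∑ α ∈ grid n ℓ, (ph ω * ((T α * T (ω - α):ℝ):ℂ) * ee n ω x) * ((N:ℂ))^n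
          = (∑ α ∈ grid n ℓ, ((T α * T (ω - α) : ℝ):ℂ))
              * (ph ω * ee n ω x * ((N:ℂ))^n) := by
            rw [Finset.sum_mul]
            apply Finset.sum_congr rfl
            intro α _
            ring
        _ = ((KK ω : ℝ):ℂ) * (ph ω * ee n ω x * ((N:ℂ))^n) := by
            rw [← Complex.ofReal_sum, h7]
        _ = ((N:ℂ))^n * (((A0^n : ℝ)):ℂ) * (ch ω * ee n ω x) := by
            rw [hph]
            have hrk : ((r ω :ℝ):ℂ) * ((KK ω:ℝ):ℂ) = (((A0^n : ℝ)):ℂ) := by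
              rw [← Complex.ofReal_mul]
              congr 1
              rw [hreq]
              rw [div_mul_cancel₀ _ (ne_of_gt (hKKpos ω hω))]
            calc ((KK ω : ℝ):ℂ) * (ch ω * ((r ω : ℝ) : ℂ) * ee n ω x * ((N:ℂ))^n)
                = (((r ω :ℝ):ℂ) * ((KK ω:ℝ):ℂ)) * (ch ω * ee n ω x) * ((N:ℂ))^n := by
                  ring
              _ = ((N:ℂ))^n * (((A0^n : ℝ)):ℂ) * (ch ω * ee n ω x) := by
                  rw [hrk]
                  ring
    rw [Finset.sum_congr rfl hinner, ← Finset.mul_sum, ← hqhat x]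
  -- final assembly
  set Cst : ℝ := (N:ℝ)^n * A0^n with hCst
  have hNR : (0:ℝ) < (N:ℝ) := by exact_mod_cast hNpos
  have hCpos : 0 < Cst := by rw [hCst]; positivity
  set g : (Fin n → Fin N) → (Fin n → ℝ) → ℝ :=
    fun k x => Real.sqrt (pr k / Cst) * (W k x).re with hgdef
  have hg : ∀ k x, g k x = Real.sqrt (pr k / Cst) * (W k x).re := fun _ _ => rfl
  have hreal_id : ∀ x, q x = ∑ k : Fin n → Fin N, g k x ^ 2 := by
    intro x
    have h1 := hmain x
    have h2 : ∑ k : Fin n → Fin N, ((pr k : ℝ):ℂ) * (((W k x).re : ℝ):ℂ)^2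
        = ((N:ℂ))^n * (((A0^n : ℝ)):ℂ) * ((q x : ℝ):ℂ) := by
      rw [← h1]
      apply Finset.sum_congr rfl
      intro k _
      rw [hprc k, hWreal k x]
    have h3 : ((∑ k : Fin n → Fin N, pr k * (W k x).re^2 : ℝ) : ℂ)
        = ((Cst * q x : ℝ) : ℂ) := by
      calc ((∑ k : Fin n → Fin N, pr k * (W k x).re^2 : ℝ) : ℂ)
          = ∑ k : Fin n → Fin N, ((pr k : ℝ):ℂ) * (((W k x).re : ℝ):ℂ)^2 := by
            push_cast
            rfl
        _ = ((N:ℂ))^n * (((A0^n : ℝ)):ℂ) * ((q x : ℝ):ℂ) := h2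
        _ = ((Cst * q x : ℝ) : ℂ) := by
            rw [hCst]
            push_cast
            ring
    have h4 : ∑ k : Fin n → Fin N, pr k * (W k x).re^2 = Cst * q x := by exact_mod_cast h3
    have h5 : ∀ k, g k x ^2 = (pr k / Cst) * (W k x).re^2 := by
      intro k
      rw [hg, mul_pow, Real.sq_sqrt (div_nonneg (hprpos k) hCpos.le)]
    rw [Finset.sum_congr rfl (fun k _ => h5 k)]
    have h6 : ∑ k : Fin n → Fin N, (pr k / Cst) * (W k x).re^2
        = (∑ k : Fin n → Fin N, pr k * (W k x).re^2)/Cst := by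
      rw [Finset.sum_div]
      apply Finset.sum_congr rfl
      intro k _
      ring
    rw [h6, h4]
    field_simp
  refine ⟨Fintype.card (Fin n → Fin N),
    fun i => g ((Fintype.equivFin (Fin n → Fin N)).symm i), ?_, ?_⟩
  · intro i
    set k := (Fintype.equivFin (Fin n → Fin N)).symm i with hk
    refine ⟨fun α => ((Real.sqrt (pr k / Cst) : ℝ) : ℂ) * bco k α, fun x => ?_⟩
    rw [trigEval_eq]
    have hgc : ((g k x : ℝ):ℂ) = ((Real.sqrt (pr k / Cst) : ℝ):ℂ) * W k x := by
      rw [hg, Complex.ofReal_mul, hWreal k x]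
    rw [hgc, hW, Finset.mul_sum]
    apply Finset.sum_congr rfl
    intro α _
    ring
  · intro x
    rw [hreal_id x]
    exact (Equiv.sum_comp ((Fintype.equivFin (Fin n → Fin N)).symm)
      (fun k => g k x ^ 2)).symm

end
end

section
/- Hierarchy values are lower bounds: Let n ≥ 2, suppose A(x) is positive definite for every x ∈ B, let g be a real polynomial, and let v* be continuous on B, C² on the open unit ball, with L v* = 0 on the open unit ball and v* = g on S. For ℓ ∈ ℕ define v*_{𝒯ℓ}(x₀) := sup{ v(x₀) : v a real polynomial of degree ≤ 2ℓ, −L v ∈ Q_ℓ(b), (g − v) ∘ ψ ∈ Σ_ℓ^𝒯 }. Then for every x₀ ∈ B and every ℓ ∈ ℕ, v*_{𝒯ℓ}(x₀) ≤ v*(x₀). -/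
open MvPolynomial

noncomputable section

/-- The closed Euclidean unit ball in `ℝⁿ`. -/
def Bset (n : ℕ) : Set (Fin n → ℝ) := {x | ∑ i, x i ^ 2 ≤ 1}

/-- The open Euclidean unit ball in `ℝⁿ`. -/
def openBall (n : ℕ) : Set (Fin n → ℝ) := {x | ∑ i, x i ^ 2 < 1}

/-- The unit sphere in `ℝⁿ`. -/
def Sset (n : ℕ) : Set (Fin n → ℝ) := {x | ∑ i, x i ^ 2 = 1}

/-- The polynomial `b(x) = 1 - ‖x‖₂²`. -/
def ballPoly (n : ℕ) : MvPolynomial (Fin n) ℝ := 1 - ∑ i, X i ^ 2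

/-- Sums of squares of real polynomials. -/
def IsSoS {n : ℕ} (p : MvPolynomial (Fin n) ℝ) : Prop :=
  ∃ (s : ℕ) (q : Fin s → MvPolynomial (Fin n) ℝ), p = ∑ i, q i ^ 2

/-- The truncated quadratic module `Q_ℓ(b)`. -/
def Qmod (n ℓ : ℕ) : Set (MvPolynomial (Fin n) ℝ) :=
  {p | ∃ σ₀ σ₁ : MvPolynomial (Fin n) ℝ, IsSoS σ₀ ∧ IsSoS σ₁ ∧
    σ₀.totalDegree ≤ 2 * ℓ ∧ (ballPoly n * σ₁).totalDegree ≤ 2 * ℓ ∧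
    p = σ₀ + ballPoly n * σ₁}

/-- The rescaled spherical-coordinates map `ψ : [0,1]^{n-1} → ℝⁿ`. -/
def psi (n : ℕ) (θ : Fin (n - 1) → ℝ) : Fin n → ℝ := fun i =>
  let t : ℕ → ℝ := fun j => if h : j < n - 1 then θ ⟨j, h⟩ else 0
  if (i : ℕ) < n - 2 then
    Real.cos (2 * Real.pi * t i) * ∏ j ∈ Finset.range i, Real.sin (2 * Real.pi * t j)
  else if (i : ℕ) = n - 2 then
    (∏ j ∈ Finset.range (n - 2), Real.sin (2 * Real.pi * t j)) *
      Real.cos (4 * Real.pi * t (n - 2))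
  else
    (∏ j ∈ Finset.range (n - 2), Real.sin (2 * Real.pi * t j)) *
      Real.sin (4 * Real.pi * t (n - 2))

/-- The generator `L` acting on `C²` functions. -/
def Lgen {n : ℕ} (a : Fin n → Fin n → MvPolynomial (Fin n) ℝ)
    (f0 : Fin n → MvPolynomial (Fin n) ℝ) (v : (Fin n → ℝ) → ℝ) (x : Fin n → ℝ) : ℝ :=
  -(∑ i, ∑ j, eval x (a i j) *
      fderiv ℝ (fun y => fderiv ℝ v y (Pi.single j 1)) x (Pi.single i 1)) +
    ∑ i, eval x (f0 i) * fderiv ℝ v x (Pi.single i 1)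

/-- The generator `L` acting on polynomials. -/
def LgenPoly {n : ℕ} (a : Fin n → Fin n → MvPolynomial (Fin n) ℝ)
    (f0 : Fin n → MvPolynomial (Fin n) ℝ) (v : MvPolynomial (Fin n) ℝ) :
    MvPolynomial (Fin n) ℝ :=
  -(∑ i, ∑ j, a i j * pderiv i (pderiv j v)) + ∑ i, f0 i * pderiv i v

noncomputable def polyD {n : ℕ} (p : MvPolynomial (Fin n) ℝ) (x : Fin n → ℝ) :
    (Fin n → ℝ) →L[ℝ] ℝ :=
  ∑ i, eval x (pderiv i p) • (ContinuousLinearMap.proj i : (Fin n → ℝ) →L[ℝ] ℝ)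

theorem polyD_apply {n : ℕ} (p : MvPolynomial (Fin n) ℝ) (x d : Fin n → ℝ) :
    polyD p x d = ∑ i, eval x (pderiv i p) * d i := by
  simp [polyD]

theorem mvpoly_hasFDerivAt {n : ℕ} (p : MvPolynomial (Fin n) ℝ) (x : Fin n → ℝ) :
    HasFDerivAt (fun y => eval y p) (polyD p x) x := by
  induction p using MvPolynomial.induction_on with
  | C a =>
      have : polyD (C a : MvPolynomial (Fin n) ℝ) x = 0 := by
        simp [polyD]
      simpa [this] using (hasFDerivAt_const a x)
  | add p q hp hq =>
      have : polyD (p + q) x = polyD p x + polyD q x := by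
        simp [polyD, add_smul, Finset.sum_add_distrib]
      simpa [this] using hp.fun_add hq
  | mul_X p i hp =>
      have h2 : HasFDerivAt (fun y : Fin n → ℝ => y i)
          (ContinuousLinearMap.proj i : (Fin n → ℝ) →L[ℝ] ℝ) x :=
        (ContinuousLinearMap.proj i : (Fin n → ℝ) →L[ℝ] ℝ).hasFDerivAt
      have hm := hp.mul h2
      have heq : polyD (p * X i) x
          = eval x p • (ContinuousLinearMap.proj i : (Fin n → ℝ) →L[ℝ] ℝ)
            + x i • polyD p x := by
        apply ContinuousLinearMap.ext
        intro d
        simp only [polyD_apply, ContinuousLinearMap.add_apply,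
          ContinuousLinearMap.smul_apply, ContinuousLinearMap.proj_apply, smul_eq_mul,
          polyD_apply]
        have : ∀ j : Fin n, eval x (pderiv j (p * X i)) * d j
            = eval x (pderiv j p) * x i * d j
              + (if i = j then eval x p * d j else 0) := by
          intro j
          rw [pderiv_mul, pderiv_X]
          rcases eq_or_ne i j with h | h <;> simp [h, Pi.single_apply] <;> ring
        rw [Finset.sum_congr rfl fun j _ => this j, Finset.sum_add_distrib,
          Finset.sum_ite_eq (Finset.univ : Finset (Fin n)) i
            (fun j => eval x p * d j)]
        simp only [Finset.mem_univ, if_true, Finset.mul_sum]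
        rw [add_comm]
        congr 1
        exact Finset.sum_congr rfl fun j _ => by ring
      have hfun : (fun y => eval y (p * X i)) = fun y => eval y p * y i := by
        funext y; simp
      rw [hfun, heq]
      exact hm

theorem mvpoly_fderiv_single {n : ℕ} (p : MvPolynomial (Fin n) ℝ) (x : Fin n → ℝ)
    (i : Fin n) :
    fderiv ℝ (fun y => eval y p) x (Pi.single i 1) = eval x (pderiv i p) := by
  rw [(mvpoly_hasFDerivAt p x).fderiv, polyD_apply]
  simp [Pi.single_apply, eq_comm]

theorem mvpoly_contDiff {n : ℕ} (p : MvPolynomial (Fin n) ℝ) :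
    ContDiff ℝ ⊤ (fun y : Fin n → ℝ => eval y p) := by
  induction p using MvPolynomial.induction_on with
  | C a => simpa using contDiff_const (c := a)
  | add p q hp hq => simpa using hp.add hq
  | mul_X p i hp =>
      have : (fun y : Fin n → ℝ => eval y (p * X i)) = fun y => eval y p * y i := by
        funext y; simp
      rw [this]
      exact hp.mul (ContinuousLinearMap.proj i : (Fin n → ℝ) →L[ℝ] ℝ).contDiff

theorem mvpoly_fderiv2_single {n : ℕ} (p : MvPolynomial (Fin n) ℝ) (x : Fin n → ℝ)
    (i j : Fin n) :
    fderiv ℝ (fun y => fderiv ℝ (fun z => eval z p) y (Pi.single j 1)) x (Pi.single i 1)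
      = eval x (pderiv i (pderiv j p)) := by
  have : (fun y => fderiv ℝ (fun z => eval z p) y (Pi.single j 1))
      = fun y => eval y (pderiv j p) := funext fun y => mvpoly_fderiv_single p y j
  rw [this, mvpoly_fderiv_single]

theorem lgen_poly_eval {n : ℕ} (a : Fin n → Fin n → MvPolynomial (Fin n) ℝ)
    (f0 : Fin n → MvPolynomial (Fin n) ℝ) (v : MvPolynomial (Fin n) ℝ) (x : Fin n → ℝ) :
    Lgen a f0 (fun y => eval y v) x = eval x (LgenPoly a f0 v) := by
  simp only [Lgen, LgenPoly, map_add, map_neg, map_sum, eval_mul,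
    mvpoly_fderiv2_single, mvpoly_fderiv_single]

theorem exp_hasFDerivAt {n : ℕ} (lam : ℝ) (i0 : Fin n) (x : Fin n → ℝ) :
    HasFDerivAt (fun y : Fin n → ℝ => Real.exp (lam * y i0))
      ((lam * Real.exp (lam * x i0)) • (ContinuousLinearMap.proj i0 : (Fin n → ℝ) →L[ℝ] ℝ)) x := by
  have h1 : HasFDerivAt (fun y : Fin n → ℝ => lam * y i0)
      (lam • (ContinuousLinearMap.proj i0 : (Fin n → ℝ) →L[ℝ] ℝ)) x :=
    ((ContinuousLinearMap.proj i0 : (Fin n → ℝ) →L[ℝ] ℝ).hasFDerivAt).const_smul lam |>.congr_fderiv (by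
      ext d; simp [smul_eq_mul])
  have h2 := (Real.hasDerivAt_exp (lam * x i0)).comp_hasFDerivAt x h1
  refine h2.congr_fderiv ?_
  ext d
  simp [smul_eq_mul]
  ring

theorem exp_contDiff {n : ℕ} (lam : ℝ) (i0 : Fin n) :
    ContDiff ℝ ⊤ (fun y : Fin n → ℝ => Real.exp (lam * y i0)) :=
  Real.contDiff_exp.comp
    (contDiff_const.mul (ContinuousLinearMap.proj i0 : (Fin n → ℝ) →L[ℝ] ℝ).contDiff)

theorem exp_fderiv_single {n : ℕ} (lam : ℝ) (i0 : Fin n) (x : Fin n → ℝ) (i : Fin n) :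
    fderiv ℝ (fun y : Fin n → ℝ => Real.exp (lam * y i0)) x (Pi.single i 1)
      = if i = i0 then lam * Real.exp (lam * x i0) else 0 := by
  rw [(exp_hasFDerivAt lam i0 x).fderiv]
  rcases eq_or_ne i i0 with h | h
  · simp [h]
  · simp [h, Pi.single_apply, Ne.symm h]

theorem exp_fderiv2_single {n : ℕ} (lam : ℝ) (i0 : Fin n) (x : Fin n → ℝ) (i j : Fin n) :
    fderiv ℝ (fun y => fderiv ℝ (fun z : Fin n → ℝ => Real.exp (lam * z i0)) y (Pi.single j 1))
        x (Pi.single i 1)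
      = if j = i0 ∧ i = i0 then lam * lam * Real.exp (lam * x i0) else 0 := by
  have hin : (fun y => fderiv ℝ (fun z : Fin n → ℝ => Real.exp (lam * z i0)) y (Pi.single j 1))
      = fun y => if j = i0 then lam * Real.exp (lam * y i0) else 0 := by
    funext y; rw [exp_fderiv_single]
  rw [hin]
  rcases eq_or_ne j i0 with h | h
  · simp only [h, if_true, true_and]
    have h2 := (exp_hasFDerivAt lam i0 x).const_mul lam
    rw [h2.fderiv]
    rcases eq_or_ne i i0 with h' | h'
    · simp [h', smul_eq_mul]; ring
    · simp [h', Pi.single_apply, Ne.symm h', smul_eq_mul]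
  · simp [h]

theorem lgen_exp {n : ℕ} (a : Fin n → Fin n → MvPolynomial (Fin n) ℝ)
    (f0 : Fin n → MvPolynomial (Fin n) ℝ) (lam : ℝ) (i0 : Fin n) (x : Fin n → ℝ) :
    Lgen a f0 (fun y => Real.exp (lam * y i0)) x
      = (-(eval x (a i0 i0)) * (lam * lam) + eval x (f0 i0) * lam) * Real.exp (lam * x i0) := by
  unfold Lgen
  simp only [exp_fderiv2_single]
  simp only [exp_fderiv_single, ite_and, mul_ite, mul_zero,
    Finset.sum_ite_eq', Finset.mem_univ, if_true]
  ring

theorem deriv2_nonneg_of_localmin {g g' : ℝ → ℝ} {c : ℝ}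
    (hg : ∀ᶠ t in nhds (0:ℝ), HasDerivAt g (g' t) t)
    (hmin : ∀ᶠ t in nhds (0:ℝ), g 0 ≤ g t)
    (hg'0 : g' 0 = 0) (hg'' : HasDerivAt g' c 0) : 0 ≤ c := by
  by_contra hc
  push_neg at hc
  have hs := hasDerivAt_iff_tendsto_slope.1 hg''
  have hev : ∀ᶠ t in nhdsWithin (0:ℝ) {(0:ℝ)}ᶜ, slope g' 0 t < c/2 :=
    hs (Iio_mem_nhds (by linarith))
  rw [eventually_nhdsWithin_iff] at hev
  have hall : ∀ᶠ t in nhds (0:ℝ),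
      HasDerivAt g (g' t) t ∧ g 0 ≤ g t ∧ (t ∈ ({(0:ℝ)}ᶜ : Set ℝ) → slope g' 0 t < c/2) :=
    hg.and (hmin.and hev)
  rw [Metric.eventually_nhds_iff] at hall
  obtain ⟨ε, hε, hP⟩ := hall
  set δ := ε/2 with hδdef
  have hδ : 0 < δ := by positivity
  have hPδ : ∀ t ∈ Set.Icc (0:ℝ) δ, HasDerivAt g (g' t) t ∧ g 0 ≤ g t ∧
      (t ≠ 0 → slope g' 0 t < c/2) := by
    intro t ht
    refine hP ?_
    rw [Real.dist_eq]
    rcases ht with ⟨h1, h2⟩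
    rw [abs_sub_comm, abs_of_nonpos (by linarith)]
    simp only [neg_sub, sub_zero]
    linarith
  have hanti : StrictAntiOn g (Set.Icc (0:ℝ) δ) := by
    apply strictAntiOn_of_deriv_neg (convex_Icc 0 δ)
    · intro t ht
      exact ((hPδ t ht).1).continuousAt.continuousWithinAt
    · intro t ht
      rw [interior_Icc] at ht
      rw [((hPδ t ⟨le_of_lt ht.1, le_of_lt ht.2⟩).1).deriv]
      have hslope := (hPδ t ⟨le_of_lt ht.1, le_of_lt ht.2⟩).2.2 (ne_of_gt ht.1)
      rw [slope_def_field, hg'0, sub_zero, sub_zero, div_lt_iff₀ ht.1] at hslope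
      nlinarith [ht.1, hc]
  have h1 : g δ < g 0 := hanti ⟨le_refl 0, le_of_lt hδ⟩ ⟨le_of_lt hδ, le_refl δ⟩ hδ
  have h2 : g 0 ≤ g δ := (hPδ δ ⟨le_of_lt hδ, le_refl δ⟩).2.1
  linarith

theorem snd_deriv_nonneg_of_localmin {n : ℕ} {u : (Fin n → ℝ) → ℝ} {U : Set (Fin n → ℝ)}
    (hU : IsOpen U) {xb : Fin n → ℝ} (hx : xb ∈ U) (hu : ContDiffOn ℝ 2 u U)
    (hmin : ∀ᶠ y in nhds xb, u xb ≤ u y) (d : Fin n → ℝ) :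
    0 ≤ fderiv ℝ (fun y => fderiv ℝ u y) xb d d := by
  have hf'C1 : ContDiffOn ℝ 1 (fun y => fderiv ℝ u y) U :=
    hu.fderiv_of_isOpen hU (by norm_num)
  have hf'diff : DifferentiableAt ℝ (fun y => fderiv ℝ u y) xb :=
    (hf'C1.differentiableOn one_ne_zero).differentiableAt (hU.mem_nhds hx)
  have hudiff : ∀ y ∈ U, DifferentiableAt ℝ u y := fun y hy =>
    (hu.differentiableOn (by norm_num)).differentiableAt (hU.mem_nhds hy)
  have hline : ∀ t : ℝ, HasDerivAt (fun s : ℝ => xb + s • d) d t := by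
    intro t
    simpa using ((hasDerivAt_id t).smul_const d).const_add xb
  have h0 : Filter.Tendsto (fun t : ℝ => xb + t • d) (nhds 0) (nhds xb) := by
    have := ((hline 0).continuousAt : ContinuousAt (fun s : ℝ => xb + s • d) 0)
    simpa using this.tendsto
  have hevU : ∀ᶠ t in nhds (0:ℝ), xb + t • d ∈ U := h0.eventually (hU.eventually_mem hx)
  have hg : ∀ᶠ t in nhds (0:ℝ),
      HasDerivAt (fun s => u (xb + s • d)) (fderiv ℝ u (xb + t • d) d) t := by
    filter_upwards [hevU] with t ht
    exact ((hudiff _ ht).hasFDerivAt.comp_hasDerivAt t (hline t))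
  have hminev : ∀ᶠ t in nhds (0:ℝ), u (xb + (0:ℝ) • d) ≤ u (xb + t • d) := by
    have := h0.eventually hmin
    simpa using this
  have happ : HasFDerivAt (fun y => fderiv ℝ u y d)
      ((ContinuousLinearMap.apply ℝ ℝ d).comp (fderiv ℝ (fun y => fderiv ℝ u y) xb)) xb :=
    ((ContinuousLinearMap.apply ℝ ℝ d).hasFDerivAt).comp xb hf'diff.hasFDerivAt
  have hg'' : HasDerivAt (fun t : ℝ => fderiv ℝ u (xb + t • d) d)
      (fderiv ℝ (fun y => fderiv ℝ u y) xb d d) 0 := by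
    have hl0 : HasDerivAt (fun s : ℝ => xb + s • d) d 0 := hline 0
    have h00 : xb = xb + (0:ℝ) • d := by simp
    rw [h00] at happ
    have := happ.comp_hasDerivAt 0 hl0
    simpa [Function.comp_def] using this
  have hg'0 : fderiv ℝ u (xb + (0:ℝ) • d) d = 0 := by
    have hz : fderiv ℝ u xb = 0 := IsLocalMin.fderiv_eq_zero hmin
    simp [hz]
  exact deriv2_nonneg_of_localmin hg hminev hg'0 hg''

theorem fderiv2_apply_single {n : ℕ} {u : (Fin n → ℝ) → ℝ} {U : Set (Fin n → ℝ)}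
    (hU : IsOpen U) {xb : Fin n → ℝ} (hx : xb ∈ U) (hu : ContDiffOn ℝ 2 u U)
    (d e : Fin n → ℝ) :
    fderiv ℝ (fun y => fderiv ℝ u y d) xb e
      = fderiv ℝ (fun y => fderiv ℝ u y) xb e d := by
  have hC1 : ContDiffOn ℝ 1 (fun y => fderiv ℝ u y) U := hu.fderiv_of_isOpen hU (by norm_num)
  have hf'diff : DifferentiableAt ℝ (fun y => fderiv ℝ u y) xb :=
    (hC1.differentiableOn one_ne_zero).differentiableAt (hU.mem_nhds hx)
  have happ : HasFDerivAt (fun y => fderiv ℝ u y d)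
      ((ContinuousLinearMap.apply ℝ ℝ d).comp (fderiv ℝ (fun y => fderiv ℝ u y) xb)) xb :=
    ((ContinuousLinearMap.apply ℝ ℝ d).hasFDerivAt).comp xb hf'diff.hasFDerivAt
  rw [happ.fderiv]
  rfl

theorem lgen_nonpos_of_localmin {n r : ℕ} (a : Fin n → Fin n → MvPolynomial (Fin n) ℝ)
    (f0 : Fin n → MvPolynomial (Fin n) ℝ) (F : Fin n → Fin r → ℝ)
    {U : Set (Fin n → ℝ)} (hU : IsOpen U) {xb : Fin n → ℝ} (hx : xb ∈ U)
    {u : (Fin n → ℝ) → ℝ} (hu : ContDiffOn ℝ 2 u U)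
    (hmin : ∀ᶠ y in nhds xb, u xb ≤ u y)
    (hF : ∀ i j, eval xb (a i j) = ∑ k, F i k * F j k) :
    Lgen a f0 u xb ≤ 0 := by
  have hz : fderiv ℝ u xb = 0 := IsLocalMin.fderiv_eq_zero hmin
  set H := fderiv ℝ (fun y => fderiv ℝ u y) xb with hH
  have hterm : ∀ i j : Fin n,
      fderiv ℝ (fun y => fderiv ℝ u y (Pi.single j 1)) xb (Pi.single i 1)
        = H (Pi.single i 1) (Pi.single j 1) := fun i j =>
    fderiv2_apply_single hU hx hu _ _
  have hquad : ∀ k : Fin r,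
      H (fun idx => F idx k) (fun idx => F idx k)
        = ∑ i, ∑ j, F i k * F j k * H (Pi.single j 1) (Pi.single i 1) := by
    intro k
    have hrep : (fun idx => F idx k) = ∑ i, F i k • (Pi.single i 1 : Fin n → ℝ) := by
      funext idx
      simp [Finset.sum_apply, Pi.single_apply, Finset.sum_ite_eq', mul_comm]
    rw [hrep, map_sum]
    simp only [map_smul, ContinuousLinearMap.coe_sum', Finset.sum_apply,
      ContinuousLinearMap.coe_smul', Pi.smul_apply, map_sum, smul_eq_mul, Finset.mul_sum]
    exact Finset.sum_congr rfl fun i _ => Finset.sum_congr rfl fun j _ => by ring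
  have h2 : ∑ i, ∑ j, eval xb (a i j) * H (Pi.single i 1) (Pi.single j 1)
      = ∑ k, H (fun idx => F idx k) (fun idx => F idx k) := by
    calc ∑ i, ∑ j, eval xb (a i j) * H (Pi.single i 1) (Pi.single j 1)
        = ∑ i : Fin n, ∑ j : Fin n, ∑ k : Fin r,
            F i k * F j k * H (Pi.single i 1) (Pi.single j 1) := by
          refine Finset.sum_congr rfl fun i _ => Finset.sum_congr rfl fun j _ => ?_
          rw [hF i j, Finset.sum_mul]
      _ = ∑ i : Fin n, ∑ k : Fin r, ∑ j : Fin n,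
            F i k * F j k * H (Pi.single i 1) (Pi.single j 1) := by
          exact Finset.sum_congr rfl fun i _ => Finset.sum_comm
      _ = ∑ k : Fin r, ∑ i : Fin n, ∑ j : Fin n,
            F i k * F j k * H (Pi.single i 1) (Pi.single j 1) := Finset.sum_comm
      _ = ∑ k, H (fun idx => F idx k) (fun idx => F idx k) := by
          refine Finset.sum_congr rfl fun k _ => ?_
          rw [hquad k, Finset.sum_comm]
          exact Finset.sum_congr rfl fun i _ => Finset.sum_congr rfl fun j _ => by ring
  have hpos : 0 ≤ ∑ k, H (fun idx => F idx k) (fun idx => F idx k) :=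
    Finset.sum_nonneg fun k _ => snd_deriv_nonneg_of_localmin hU hx hu hmin _
  have : Lgen a f0 u xb = -(∑ i, ∑ j, eval xb (a i j) * H (Pi.single i 1) (Pi.single j 1)) := by
    simp [Lgen, hterm, hz]
  rw [this, h2]
  linarith

theorem diff_inner {n : ℕ} {u : (Fin n → ℝ) → ℝ} {U : Set (Fin n → ℝ)}
    (hU : IsOpen U) {xb : Fin n → ℝ} (hx : xb ∈ U) (hu : ContDiffOn ℝ 2 u U)
    (d : Fin n → ℝ) :
    DifferentiableAt ℝ (fun y => fderiv ℝ u y d) xb := by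
  have hC1 : ContDiffOn ℝ 1 (fun y => fderiv ℝ u y) U := hu.fderiv_of_isOpen hU (by norm_num)
  have hf'diff : DifferentiableAt ℝ (fun y => fderiv ℝ u y) xb :=
    (hC1.differentiableOn one_ne_zero).differentiableAt (hU.mem_nhds hx)
  exact ((ContinuousLinearMap.apply ℝ ℝ d).hasFDerivAt.comp xb hf'diff.hasFDerivAt).differentiableAt

theorem lgen_add {n : ℕ} (a : Fin n → Fin n → MvPolynomial (Fin n) ℝ)
    (f0 : Fin n → MvPolynomial (Fin n) ℝ) {U : Set (Fin n → ℝ)} (hU : IsOpen U)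
    {xb : Fin n → ℝ} (hx : xb ∈ U) {u1 u2 : (Fin n → ℝ) → ℝ}
    (h1 : ContDiffOn ℝ 2 u1 U) (h2 : ContDiffOn ℝ 2 u2 U) :
    Lgen a f0 (fun x => u1 x + u2 x) xb = Lgen a f0 u1 xb + Lgen a f0 u2 xb := by
  have hd1 : ∀ y ∈ U, DifferentiableAt ℝ u1 y := fun y hy =>
    (h1.differentiableOn (by norm_num)).differentiableAt (hU.mem_nhds hy)
  have hd2 : ∀ y ∈ U, DifferentiableAt ℝ u2 y := fun y hy =>
    (h2.differentiableOn (by norm_num)).differentiableAt (hU.mem_nhds hy)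
  have hfd : ∀ d : Fin n → ℝ,
      fderiv ℝ (fun x => u1 x + u2 x) xb d = fderiv ℝ u1 xb d + fderiv ℝ u2 xb d := by
    intro d
    rw [fderiv_fun_add (hd1 xb hx) (hd2 xb hx)]; rfl
  have hfd2 : ∀ i j : Fin n,
      fderiv ℝ (fun y => fderiv ℝ (fun x => u1 x + u2 x) y (Pi.single j 1)) xb (Pi.single i 1)
        = fderiv ℝ (fun y => fderiv ℝ u1 y (Pi.single j 1)) xb (Pi.single i 1)
          + fderiv ℝ (fun y => fderiv ℝ u2 y (Pi.single j 1)) xb (Pi.single i 1) := by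
    intro i j
    have hev : (fun y => fderiv ℝ (fun x => u1 x + u2 x) y (Pi.single j 1))
        =ᶠ[nhds xb] (fun y => fderiv ℝ u1 y (Pi.single j 1) + fderiv ℝ u2 y (Pi.single j 1)) := by
      filter_upwards [hU.mem_nhds hx] with y hy
      rw [fderiv_fun_add (hd1 y hy) (hd2 y hy)]; rfl
    rw [hev.fderiv_eq,
      fderiv_fun_add (diff_inner hU hx h1 _) (diff_inner hU hx h2 _)]
    rfl
  simp only [Lgen, hfd, hfd2, mul_add, Finset.sum_add_distrib]
  ring

theorem lgen_const_mul {n : ℕ} (a : Fin n → Fin n → MvPolynomial (Fin n) ℝ)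
    (f0 : Fin n → MvPolynomial (Fin n) ℝ) {U : Set (Fin n → ℝ)} (hU : IsOpen U)
    {xb : Fin n → ℝ} (hx : xb ∈ U) {u : (Fin n → ℝ) → ℝ} (c : ℝ)
    (h1 : ContDiffOn ℝ 2 u U) :
    Lgen a f0 (fun x => c * u x) xb = c * Lgen a f0 u xb := by
  have hd1 : ∀ y ∈ U, DifferentiableAt ℝ u y := fun y hy =>
    (h1.differentiableOn (by norm_num)).differentiableAt (hU.mem_nhds hy)
  have hfd : ∀ d : Fin n → ℝ,
      fderiv ℝ (fun x => c * u x) xb d = c * fderiv ℝ u xb d := by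
    intro d
    rw [fderiv_const_mul (hd1 xb hx) c]; rfl
  have hfd2 : ∀ i j : Fin n,
      fderiv ℝ (fun y => fderiv ℝ (fun x => c * u x) y (Pi.single j 1)) xb (Pi.single i 1)
        = c * fderiv ℝ (fun y => fderiv ℝ u y (Pi.single j 1)) xb (Pi.single i 1) := by
    intro i j
    have hev : (fun y => fderiv ℝ (fun x => c * u x) y (Pi.single j 1))
        =ᶠ[nhds xb] (fun y => c * fderiv ℝ u y (Pi.single j 1)) := by
      filter_upwards [hU.mem_nhds hx] with y hy
      rw [fderiv_const_mul (hd1 y hy) c]; rfl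
    rw [hev.fderiv_eq, fderiv_const_mul (diff_inner hU hx h1 _) c]
    rfl
  simp only [Lgen, hfd, hfd2,
    show ∀ a d : ℝ, a * (c * d) = c * (a * d) from fun a d => mul_left_comm a c d,
    ← Finset.mul_sum]
  ring

theorem psi_surj (n : ℕ) (hn : 2 ≤ n) (x : Fin n → ℝ) (hx : ∑ i, x i ^ 2 = 1) :
    ∃ θ : Fin (n - 1) → ℝ, psi n θ = x := by
  -- tail sums
  set S : ℕ → Finset (Fin n) := fun k => Finset.univ.filter (fun i => k ≤ (i : ℕ)) with hS
  set R : ℕ → ℝ := fun k => ∑ i ∈ S k, x i ^ 2 with hRdef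
  set r : ℕ → ℝ := fun k => Real.sqrt (R k) with hrdef
  have hRnonneg : ∀ k, 0 ≤ R k := fun k => Finset.sum_nonneg fun i _ => sq_nonneg _
  have hr_nonneg : ∀ k, 0 ≤ r k := fun k => Real.sqrt_nonneg _
  have hr_sq : ∀ k, r k ^ 2 = R k := fun k => Real.sq_sqrt (hRnonneg k)
  have hR0 : R 0 = 1 := by
    simp only [hRdef]
    rw [show S 0 = Finset.univ from by simp [hS]]
    exact hx
  have hr0 : r 0 = 1 := by simp only [hrdef]; simp [hR0]
  have hRn : ∀ k, n ≤ k → R k = 0 := by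
    intro k hk
    simp only [hRdef]
    rw [show S k = ∅ from by
      apply Finset.eq_empty_of_forall_notMem
      intro i hi
      simp only [hS, Finset.mem_filter] at hi
      omega]
    simp
  have hstep : ∀ k, ∀ h : k < n, R k = x ⟨k, h⟩ ^ 2 + R (k + 1) := by
    intro k hk
    have hmem : (⟨k, hk⟩ : Fin n) ∈ S k := by simp [hS]
    have herase : S (k + 1) = (S k).erase ⟨k, hk⟩ := by
      ext i
      simp only [hS, Finset.mem_filter, Finset.mem_erase, Finset.mem_univ, true_and, and_true]
      constructor
      · intro h
        refine ⟨?_, by omega⟩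
        intro hcon
        have : (i : ℕ) = k := by rw [hcon]
        omega
      · intro ⟨h1, h2⟩
        have : (i : ℕ) ≠ k := by
          intro hcon
          exact h1 (Fin.ext hcon)
        omega
    simp only [hRdef]
    rw [herase, ← Finset.add_sum_erase _ _ hmem]
  have hmono : ∀ k, ∀ h : k < n, R (k + 1) ≤ R k := by
    intro k hk
    rw [hstep k hk]
    nlinarith [sq_nonneg (x ⟨k, hk⟩)]
  -- squares bounded by tail sums
  have hxle : ∀ k, ∀ h : k < n, x ⟨k, h⟩ ^ 2 ≤ R k := by
    intro k hk
    rw [hstep k hk]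
    nlinarith [hRnonneg (k + 1)]
  -- the angles
  set α : ℕ → ℝ := fun k => if h : k < n then Real.arccos (x ⟨k, h⟩ / r k) else 0 with hα
  have hcos : ∀ k, ∀ h : k < n, r k * Real.cos (α k) = x ⟨k, h⟩ := by
    intro k hk
    simp only [hα, hk, dif_pos]
    rcases eq_or_lt_of_le (hr_nonneg k) with hr0' | hrpos
    · have hRk : R k = 0 := by rw [← hr_sq k, ← hr0']; ring
      have : x ⟨k, hk⟩ ^ 2 = 0 := le_antisymm (by rw [← hRk]; exact hxle k hk) (sq_nonneg _)
      have hx0 : x ⟨k, hk⟩ = 0 := by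
        exact pow_eq_zero_iff (by norm_num) |>.mp this
      rw [hx0, ← hr0']
      ring
    · have hb : |x ⟨k, hk⟩ / r k| ≤ 1 := by
        rw [abs_div, abs_of_pos hrpos, div_le_one hrpos]
        have := hxle k hk
        rw [← hr_sq k] at this
        exact abs_le_abs (by nlinarith [abs_nonneg (x ⟨k,hk⟩), sq_abs (x ⟨k,hk⟩), hr_nonneg k]) (by nlinarith [abs_nonneg (x ⟨k,hk⟩), sq_abs (x ⟨k,hk⟩), hr_nonneg k]) |>.trans_eq (abs_of_nonneg (le_of_lt hrpos))
      rw [Real.cos_arccos (by linarith [abs_le.1 hb |>.1]) (by linarith [abs_le.1 hb |>.2])]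
      field_simp
  have hsin_nonneg : ∀ k, 0 ≤ Real.sin (α k) := by
    intro k
    simp only [hα]
    split
    · exact Real.sin_nonneg_of_nonneg_of_le_pi (Real.arccos_nonneg _) (Real.arccos_le_pi _)
    · simp
  have hsin : ∀ k, ∀ h : k < n, r k * Real.sin (α k) = r (k + 1) := by
    intro k hk
    have hnn : 0 ≤ 1 - (x ⟨k, hk⟩ / r k) ^ 2 := by
      rcases eq_or_lt_of_le (hr_nonneg k) with hr0' | hrpos
      · rw [← hr0']
        norm_num
      · have hb := hxle k hk
        rw [← hr_sq k] at hb
        have : (x ⟨k, hk⟩ / r k) ^ 2 ≤ 1 := by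
          rw [div_pow, div_le_one (by positivity)]
          exact hb
        linarith
    have hsq : (r k * Real.sin (α k)) ^ 2 = r (k + 1) ^ 2 := by
      simp only [hα, hk, dif_pos]
      rw [Real.sin_arccos]
      rw [mul_pow, Real.sq_sqrt hnn, hr_sq, hr_sq]
      rcases eq_or_lt_of_le (hr_nonneg k) with hr0' | hrpos
      · have hRk : R k = 0 := by rw [← hr_sq k, ← hr0']; ring
        have hR1 : R (k + 1) = 0 :=
          le_antisymm (by rw [← hRk]; exact hmono k hk) (hRnonneg _)
        rw [hRk, hR1]; ring
      · have hRpos : 0 < R k := by rw [← hr_sq k]; positivity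
        rw [div_pow, hr_sq, mul_sub, mul_one, mul_div_cancel₀ _ (ne_of_gt hRpos)]
        linarith [hstep k hk]
    have h1 : 0 ≤ r k * Real.sin (α k) := mul_nonneg (hr_nonneg k) (hsin_nonneg k)
    calc r k * Real.sin (α k) = Real.sqrt ((r k * Real.sin (α k)) ^ 2) :=
          (Real.sqrt_sq h1).symm
      _ = Real.sqrt (r (k + 1) ^ 2) := by rw [hsq]
      _ = r (k + 1) := Real.sqrt_sq (hr_nonneg _)
  have hprod : ∀ k, k ≤ n → (∏ j ∈ Finset.range k, Real.sin (α j)) = r k := by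
    intro k
    induction k with
    | zero => intro _; simp [hr0]
    | succ k ih =>
        intro hk
        rw [Finset.prod_range_succ, ih (by omega), hsin k (by omega)]
  -- the last two coordinates
  have hmlt : n - 2 < n := by omega
  have hm1lt : n - 2 + 1 < n := by omega
  set iA : Fin n := ⟨n - 2, hmlt⟩ with hiA
  set iB : Fin n := ⟨n - 2 + 1, hm1lt⟩ with hiB
  have hRm : R (n - 2) = x iA ^ 2 + x iB ^ 2 := by
    have h1 := hstep (n - 2) hmlt
    have h2 := hstep (n - 2 + 1) hm1lt
    have h3 := hRn (n - 2 + 1 + 1) (by omega)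
    rw [h3] at h2
    rw [h2] at h1
    rw [h1]
    ring
  have hrm_eq : r (n - 2) = Real.sqrt (x iA ^ 2 + x iB ^ 2) := by
    simp only [hrdef]; rw [hRm]
  obtain ⟨β, hA, hB⟩ : ∃ βv : ℝ, r (n - 2) * Real.cos βv = x iA ∧
      r (n - 2) * Real.sin βv = x iB := by
    refine ⟨Complex.arg ((x iA : ℂ) + (x iB : ℂ) * Complex.I), ?_, ?_⟩
    · rw [hrm_eq]
      have h := Complex.norm_mul_cos_add_sin_mul_I ((x iA : ℂ) + (x iB : ℂ) * Complex.I)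
      have h2 := congrArg Complex.re h
      simp [Complex.norm_add_mul_I, Complex.mul_re, Complex.cos_ofReal_re,
        Complex.sin_ofReal_re] at h2
      convert h2 using 2
    · rw [hrm_eq]
      have h := Complex.norm_mul_cos_add_sin_mul_I ((x iA : ℂ) + (x iB : ℂ) * Complex.I)
      have h2 := congrArg Complex.im h
      simp [Complex.norm_add_mul_I, Complex.mul_im, Complex.cos_ofReal_re,
        Complex.sin_ofReal_re] at h2
      convert h2 using 2
  -- assemble θ
  refine ⟨fun j => if (j : ℕ) < n - 2 then α j / (2 * Real.pi) else β / (4 * Real.pi), ?_⟩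
  funext i
  have hpi : (2 : ℝ) * Real.pi ≠ 0 := by
    have := Real.pi_pos
    positivity
  have hpi4 : (4 : ℝ) * Real.pi ≠ 0 := by
    have := Real.pi_pos
    positivity
  have ht : ∀ j : ℕ, j < n - 2 →
      2 * Real.pi * (if h : j < n - 1 then
        (if ((⟨j, h⟩ : Fin (n - 1)) : ℕ) < n - 2 then α j / (2 * Real.pi)
          else β / (4 * Real.pi)) else 0) = α j := by
    intro j hj
    have hj1 : j < n - 1 := by omega
    rw [dif_pos hj1]
    simp only [hj, if_pos]
    rw [mul_comm, div_mul_cancel₀ _ hpi]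
  have ht2 : 4 * Real.pi * (if h : n - 2 < n - 1 then
      (if ((⟨n - 2, h⟩ : Fin (n - 1)) : ℕ) < n - 2 then α (n - 2) / (2 * Real.pi)
        else β / (4 * Real.pi)) else 0) = β := by
    have hj1 : n - 2 < n - 1 := by omega
    rw [dif_pos hj1]
    simp only [lt_irrefl, if_neg, Fin.val_mk, if_false]
    rw [mul_comm, div_mul_cancel₀ _ hpi4]
  show psi n _ i = x i
  simp only [psi]
  by_cases h1 : (i : ℕ) < n - 2
  · rw [if_pos h1]
    have hprodt : (∏ j ∈ Finset.range (i : ℕ), Real.sin (2 * Real.pi *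
        (if h : j < n - 1 then
          (if ((⟨j, h⟩ : Fin (n - 1)) : ℕ) < n - 2 then α j / (2 * Real.pi)
            else β / (4 * Real.pi)) else 0))) = r (i : ℕ) := by
      rw [Finset.prod_congr rfl (fun j hj => by
        rw [ht j (by
          have := Finset.mem_range.1 hj
          omega)])]
      exact hprod _ (by omega)
    rw [hprodt, ht i h1]
    rw [mul_comm]
    rw [show x i = x ⟨(i : ℕ), i.isLt⟩ from by simp [Fin.eta]]
    exact hcos (i : ℕ) i.isLt
  · rw [if_neg h1]
    have hprodt : (∏ j ∈ Finset.range (n - 2), Real.sin (2 * Real.pi *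
        (if h : j < n - 1 then
          (if ((⟨j, h⟩ : Fin (n - 1)) : ℕ) < n - 2 then α j / (2 * Real.pi)
            else β / (4 * Real.pi)) else 0))) = r (n - 2) := by
      rw [Finset.prod_congr rfl (fun j hj => by
        rw [ht j (Finset.mem_range.1 hj)])]
      exact hprod _ (by omega)
    by_cases h2 : (i : ℕ) = n - 2
    · rw [if_pos h2, hprodt, ht2]
      rw [show i = iA from Fin.ext (by simp [hiA, h2])]
      exact hA
    · rw [if_neg h2, hprodt, ht2]
      rw [show i = iB from Fin.ext (by
        simp only [hiB]
        have := i.isLt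
        omega)]
      exact hB


theorem sos_eval_nonneg {n : ℕ} {p : MvPolynomial (Fin n) ℝ} (h : IsSoS p)
    (x : Fin n → ℝ) : 0 ≤ eval x p := by
  obtain ⟨s, q, rfl⟩ := h
  rw [map_sum]
  exact Finset.sum_nonneg fun i _ => by rw [map_pow]; positivity

theorem bset_isCompact (n : ℕ) : IsCompact (Bset n) := by
  have hcont : Continuous (fun x : Fin n → ℝ => ∑ i, x i ^ 2) := by
    apply continuous_finset_sum
    intro i _
    exact (continuous_apply i).pow 2
  have hclosed : IsClosed (Bset n) := isClosed_le hcont continuous_const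
  apply Metric.isCompact_of_isClosed_isBounded hclosed
  apply (Metric.isBounded_closedBall (x := (0 : Fin n → ℝ)) (r := 1)).subset
  intro x hx
  rw [Metric.mem_closedBall, dist_zero_right]
  rw [pi_norm_le_iff_of_nonneg (by norm_num)]
  intro i
  have h1 : x i ^ 2 ≤ 1 := by
    refine le_trans ?_ hx
    exact Finset.single_le_sum (f := fun j => x j ^ 2) (fun j _ => sq_nonneg _)
      (Finset.mem_univ i)
  rw [Real.norm_eq_abs]
  nlinarith [abs_nonneg (x i), sq_abs (x i)]

theorem openBall_isOpen (n : ℕ) : IsOpen (openBall n) := by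
  have hcont : Continuous (fun x : Fin n → ℝ => ∑ i, x i ^ 2) := by
    apply continuous_finset_sum
    intro i _
    exact (continuous_apply i).pow 2
  exact isOpen_lt hcont continuous_const

theorem openBall_subset_Bset (n : ℕ) : openBall n ⊆ Bset n := by
  intro x hx
  have h : ∑ i, x i ^ 2 < 1 := hx
  show ∑ i, x i ^ 2 ≤ 1
  linarith

theorem bset_decomp {n : ℕ} {x : Fin n → ℝ} (hx : x ∈ Bset n) :
    x ∈ openBall n ∨ x ∈ Sset n := by
  have hx' : ∑ i, x i ^ 2 ≤ 1 := hx
  rcases lt_or_eq_of_le hx' with h | h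
  · exact Or.inl h
  · exact Or.inr h


/-- Hierarchy values are lower bounds: every value `v(x₀)` of a polynomial `v` of degree
`≤ 2ℓ` that is feasible for the SDP (i.e. `−Lv ∈ Q_ℓ(b)` and `(g − v) ∘ ψ ∈ Σ_ℓ^𝒯`) is at
most `v*(x₀)`; hence `v*_{𝒯ℓ}(x₀) = sup{…} ≤ v*(x₀)` for every `x₀ ∈ B` and `ℓ ∈ ℕ`. -/
theorem stmt11 (n : ℕ) (hn : 2 ≤ n)
    (a : Fin n → Fin n → MvPolynomial (Fin n) ℝ) (f0 : Fin n → MvPolynomial (Fin n) ℝ)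
    (hFact : ∃ (r : ℕ) (F : Fin n → Fin r → MvPolynomial (Fin n) ℝ),
      ∀ i j, a i j = ∑ k, F i k * F j k)
    (hPD : ∀ x ∈ Bset n, Matrix.PosDef (Matrix.of fun i j => eval x (a i j)))
    (g : MvPolynomial (Fin n) ℝ)
    (vstar : (Fin n → ℝ) → ℝ)
    (hvstarCont : ContinuousOn vstar (Bset n))
    (hvstarC2 : ContDiffOn ℝ 2 vstar (openBall n))
    (hvstarL : ∀ x ∈ openBall n, Lgen a f0 vstar x = 0)
    (hvstarBd : ∀ x ∈ Sset n, vstar x = eval x g) :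
    ∀ x₀ ∈ Bset n, ∀ ℓ : ℕ, ∀ v : MvPolynomial (Fin n) ℝ,
      v.totalDegree ≤ 2 * ℓ →
      -(LgenPoly a f0 v) ∈ Qmod n ℓ →
      (fun θ => eval (psi n θ) (g - v)) ∈ SigmaT (n - 1) ℓ →
      eval x₀ v ≤ vstar x₀ := by
  intro x₀ hx₀ ℓ v hdeg hQ hT
  classical
  set i0 : Fin n := ⟨0, by omega⟩ with hi0
  obtain ⟨r, Fp, hFp⟩ := hFact
  -- nonnegativity of -Lv on B
  have hQnn : ∀ x ∈ Bset n, 0 ≤ eval x (-(LgenPoly a f0 v)) := by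
    intro x hxB
    obtain ⟨σ₀, σ₁, hs0, hs1, _, _, heq⟩ := hQ
    rw [heq, map_add, map_mul]
    have hball : 0 ≤ eval x (ballPoly n) := by
      simp only [ballPoly, map_sub, map_one, map_sum, map_pow, eval_X]
      have : ∑ i, x i ^ 2 ≤ 1 := hxB
      linarith
    have := sos_eval_nonneg hs0 x
    have := sos_eval_nonneg hs1 x
    positivity
  -- boundary inequality
  have hSnn : ∀ x ∈ Sset n, eval x v ≤ eval x g := by
    intro x hxS
    obtain ⟨θ, hθ⟩ := psi_surj n hn x hxS
    obtain ⟨s, gT, _, hsum⟩ := hT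
    have h0 : 0 ≤ eval (psi n θ) (g - v) := by
      have h1 : eval (psi n θ) (g - v) = ∑ i, gT i θ ^ 2 := hsum θ
      rw [h1]
      exact Finset.sum_nonneg fun i _ => sq_nonneg _
    rw [hθ, map_sub] at h0
    linarith
  -- positivity and bound constants for a00 and f0
  have ha00cont : ContinuousOn (fun x : Fin n → ℝ => eval x (a i0 i0)) (Bset n) :=
    ((mvpoly_contDiff (a i0 i0)).continuous).continuousOn
  have hBne : (Bset n).Nonempty := ⟨x₀, hx₀⟩
  obtain ⟨xc, hxcB, hxcmin⟩ := (bset_isCompact n).exists_isMinOn hBne ha00cont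
  set c : ℝ := eval xc (a i0 i0) with hc
  have hcpos : 0 < c := by
    have hpd := hPD xc hxcB
    have hne : (Pi.single i0 1 : Fin n → ℝ) ≠ 0 := by
      intro hcon
      have := congrFun hcon i0
      simp at this
    have := hpd.dotProduct_mulVec_pos hne
    have heval : dotProduct (star (Pi.single i0 1 : Fin n → ℝ))
        (Matrix.mulVec (Matrix.of fun i j => eval xc (a i j)) (Pi.single i0 1 : Fin n → ℝ))
        = eval xc (a i0 i0) := by
      rw [star_trivial, Matrix.mulVec_single_one, single_one_dotProduct]
      rfl
    rw [heval] at this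
    exact this
  have hcle : ∀ x ∈ Bset n, c ≤ eval x (a i0 i0) := fun x hxB => by
    have := isMinOn_iff.1 hxcmin x hxB
    simpa [hc] using this
  obtain ⟨M, hM⟩ := (bset_isCompact n).exists_bound_of_continuousOn
    (((mvpoly_contDiff (f0 i0)).continuous).continuousOn)
  have hMnn : 0 ≤ M := le_trans (norm_nonneg _) (hM x₀ hx₀)
  set lam : ℝ := (M + 1) / c with hlam
  have hlampos : 0 < lam := by positivity
  have hkey : ∀ x ∈ Bset n,
      -(eval x (a i0 i0)) * (lam * lam) + eval x (f0 i0) * lam < 0 := by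
    intro x hxB
    have h1 : c ≤ eval x (a i0 i0) := hcle x hxB
    have h2 : eval x (f0 i0) ≤ M := by
      have := hM x hxB
      rw [Real.norm_eq_abs] at this
      linarith [abs_le.1 this |>.2]
    have h3 : c * lam = M + 1 := by
      rw [hlam, mul_div_cancel₀ _ (ne_of_gt hcpos)]
    nlinarith
  -- the perturbation argument
  have hKpos : (0:ℝ) < Real.exp lam := Real.exp_pos _
  have main : ∀ ε : ℝ, 0 < ε → eval x₀ v - vstar x₀ ≤ ε * Real.exp lam := by
    intro ε hε
    set u : (Fin n → ℝ) → ℝ := fun x =>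
      vstar x + ((-1) * eval x v + (-ε) * Real.exp (lam * x i0)) with hu
    have hpoly2 : ContDiff ℝ 2 (fun x : Fin n → ℝ => eval x v) :=
      (mvpoly_contDiff v).of_le le_top
    have hexp2 : ContDiff ℝ 2 (fun x : Fin n → ℝ => Real.exp (lam * x i0)) :=
      (exp_contDiff lam i0).of_le le_top
    have hcomb : ContDiff ℝ 2 (fun x : Fin n → ℝ =>
        (-1) * eval x v + (-ε) * Real.exp (lam * x i0)) :=
      (contDiff_const.mul hpoly2).add (contDiff_const.mul hexp2)
    have hucont : ContinuousOn u (Bset n) :=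
      hvstarCont.add (hcomb.continuous.continuousOn)
    obtain ⟨xm, hxmB, hxmmin⟩ := (bset_isCompact n).exists_isMinOn hBne hucont
    have hudiff2 : ContDiffOn ℝ 2 u (openBall n) := hvstarC2.add hcomb.contDiffOn
    have hbound : -(ε * Real.exp lam) ≤ u xm := by
      rcases bset_decomp hxmB with hmem | hmem
      · exfalso
        have hlocmin : ∀ᶠ y in nhds xm, u xm ≤ u y := by
          filter_upwards [(openBall_isOpen n).mem_nhds hmem] with y hy
          exact isMinOn_iff.1 hxmmin y (openBall_subset_Bset n hy)
        have hle0 : Lgen a f0 u xm ≤ 0 := by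
          apply lgen_nonpos_of_localmin a f0 (fun i k => eval xm (Fp i k))
            (openBall_isOpen n) hmem hudiff2 hlocmin
          intro i j
          rw [hFp i j, map_sum]
          exact Finset.sum_congr rfl fun k _ => by rw [map_mul]
        have hsplit : Lgen a f0 u xm = Lgen a f0 vstar xm
            + ((-1) * eval xm (LgenPoly a f0 v)
              + (-ε) * ((-(eval xm (a i0 i0)) * (lam * lam)
                + eval xm (f0 i0) * lam) * Real.exp (lam * xm i0))) := by
          rw [show Lgen a f0 u xm = Lgen a f0 vstar xm + Lgen a f0 (fun x =>
              (-1) * eval x v + (-ε) * Real.exp (lam * x i0)) xm from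
            lgen_add a f0 (openBall_isOpen n) hmem hvstarC2 hcomb.contDiffOn]
          congr 1
          rw [show Lgen a f0 (fun x => (-1) * eval x v
              + (-ε) * Real.exp (lam * x i0)) xm
            = Lgen a f0 (fun x => (-1) * eval x v) xm
              + Lgen a f0 (fun x => (-ε) * Real.exp (lam * x i0)) xm from
            lgen_add a f0 (openBall_isOpen n) hmem
              ((contDiff_const.mul hpoly2).contDiffOn)
              ((contDiff_const.mul hexp2).contDiffOn)]
          congr 1
          · rw [lgen_const_mul a f0 (openBall_isOpen n) hmem (-1) hpoly2.contDiffOn,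
              lgen_poly_eval]
          · rw [lgen_const_mul a f0 (openBall_isOpen n) hmem (-ε) hexp2.contDiffOn,
              lgen_exp]
        have hv0 : Lgen a f0 vstar xm = 0 := hvstarL xm hmem
        have hq := hQnn xm (openBall_subset_Bset n hmem)
        rw [map_neg] at hq
        have hk := hkey xm (openBall_subset_Bset n hmem)
        have hexppos : (0:ℝ) < Real.exp (lam * xm i0) := Real.exp_pos _
        have hEneg : (-(eval xm (a i0 i0)) * (lam * lam) + eval xm (f0 i0) * lam)
            * Real.exp (lam * xm i0) < 0 := mul_neg_of_neg_of_pos hk hexppos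
        nlinarith [hsplit, hle0, mul_pos hε (neg_pos.2 hEneg)]
      · have hgb : vstar xm = eval xm g := hvstarBd xm hmem
        have hgv : eval xm v ≤ eval xm g := hSnn xm hmem
        have hxmle : xm i0 ≤ 1 := by
          have h1 : xm i0 ^ 2 ≤ 1 := by
            refine le_trans ?_ (le_of_eq hmem)
            exact Finset.single_le_sum (f := fun j => xm j ^ 2) (fun j _ => sq_nonneg _)
              (Finset.mem_univ i0)
          nlinarith
        have hexple : Real.exp (lam * xm i0) ≤ Real.exp lam := by
          apply Real.exp_le_exp.2
          nlinarith
        have : u xm = vstar xm - eval xm v - ε * Real.exp (lam * xm i0) := by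
          simp only [hu]; ring
        rw [this, hgb]
        nlinarith
    have hx0le : u x₀ = vstar x₀ - eval x₀ v - ε * Real.exp (lam * x₀ i0) := by
      simp only [hu]; ring
    have h2 : u xm ≤ u x₀ := isMinOn_iff.1 hxmmin x₀ hx₀
    rw [hx0le] at h2
    have hφpos : (0:ℝ) < Real.exp (lam * x₀ i0) := Real.exp_pos _
    have := le_trans hbound h2
    nlinarith
  by_contra hcon
  push_neg at hcon
  have hd : 0 < eval x₀ v - vstar x₀ := by linarith
  have := main ((eval x₀ v - vstar x₀) / (2 * Real.exp lam))
    (by positivity)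
  have hhalf : (eval x₀ v - vstar x₀) / (2 * Real.exp lam) * Real.exp lam
      = (eval x₀ v - vstar x₀) / 2 := by
    field_simp
  rw [hhalf] at this
  linarith


end
end

section
/- Boundary gap of the approximating candidate: Let g be a real polynomial and let v*, u be C² functions on B with v* = g on S and u = 0 on S. Let C := max{4, sup_{x ∈ B}(Σ_{i,j}|a_ij(x)| + Σ_i |f_0i(x)|)}, let δ > 0 with C·δ ≤ 1/2, and let p, q be real polynomials with ‖v* − p‖_{C²(B)} ≤ δ and ‖u − q‖_{C²(B)} ≤ δ. Set ε := 2Cδ/(1 − Cδ) and v_d := p + ε·q − ε. Then ε ≥ 4δ, and for all x ∈ S one has |(g(x) − v_d(x)) − ε| ≤ (1 + ε)·δ; in particular g(x) − v_d(x) ≥ 2δ > 0 for all x ∈ S. -/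
open MvPolynomial

noncomputable section

/-- `‖h‖_{C²(B)} ≤ δ`: the function and all its first and second order partial derivatives
are bounded by `δ` in sup-norm on `B`. -/
def C2BoundedBy (n : ℕ) (h : (Fin n → ℝ) → ℝ) (δ : ℝ) : Prop :=
  ∀ x ∈ Bset n, |h x| ≤ δ ∧
    (∀ i : Fin n, |fderiv ℝ h x (Pi.single i 1)| ≤ δ) ∧
    (∀ i j : Fin n,
      |fderiv ℝ (fun y => fderiv ℝ h y (Pi.single j 1)) x (Pi.single i 1)| ≤ δ)

/-- Boundary gap of the approximating candidate: with
`C = max{4, sup_B(Σ|a_ij| + Σ|f_0i|)}`, `Cδ ≤ 1/2`, `‖v* − p‖_{C²(B)} ≤ δ`,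
`‖u − q‖_{C²(B)} ≤ δ`, `ε = 2Cδ/(1 − Cδ)` and `v_d = p + ε·q − ε`, one has `ε ≥ 4δ` and,
for all `x ∈ S`, `|(g(x) − v_d(x)) − ε| ≤ (1 + ε)·δ`; in particular
`g(x) − v_d(x) ≥ 2δ > 0` on `S`. -/
theorem stmt14 (n : ℕ) (hn : 1 ≤ n)
    (a : Fin n → Fin n → MvPolynomial (Fin n) ℝ) (f0 : Fin n → MvPolynomial (Fin n) ℝ)
    (hFact : ∃ (r : ℕ) (F : Fin n → Fin r → MvPolynomial (Fin n) ℝ),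
      ∀ i j, a i j = ∑ k, F i k * F j k)
    (g : MvPolynomial (Fin n) ℝ)
    (U : Set (Fin n → ℝ)) (hU : IsOpen U) (hBU : Bset n ⊆ U)
    (vstar u : (Fin n → ℝ) → ℝ)
    (hvstarC2 : ContDiffOn ℝ 2 vstar U) (huC2 : ContDiffOn ℝ 2 u U)
    (hvstarBd : ∀ x ∈ Sset n, vstar x = eval x g)
    (huBd : ∀ x ∈ Sset n, u x = 0)
    (Cc : ℝ)
    (hC : Cc = max 4 (sSup ((fun x =>
      (∑ i, ∑ j, |eval x (a i j)|) + ∑ i, |eval x (f0 i)|) '' Bset n)))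
    (δ : ℝ) (hδ : 0 < δ) (hCδ : Cc * δ ≤ 1 / 2)
    (p q : MvPolynomial (Fin n) ℝ)
    (hp : C2BoundedBy n (fun y => vstar y - eval y p) δ)
    (hq : C2BoundedBy n (fun y => u y - eval y q) δ)
    (ε : ℝ) (hε : ε = 2 * Cc * δ / (1 - Cc * δ)) :
    4 * δ ≤ ε ∧
    ∀ x ∈ Sset n,
      |(eval x g - (eval x p + ε * eval x q - ε)) - ε| ≤ (1 + ε) * δ ∧
      2 * δ ≤ eval x g - (eval x p + ε * eval x q - ε) ∧
      0 < eval x g - (eval x p + ε * eval x q - ε) := by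
  have hC4 : (4:ℝ) ≤ Cc := hC ▸ le_max_left _ _
  have hδ8 : δ ≤ 1/8 := by nlinarith
  have hden : (1:ℝ)/2 ≤ 1 - Cc * δ := by linarith
  have hdenpos : (0:ℝ) < 1 - Cc * δ := by linarith
  have hε4 : 4 * δ ≤ ε := by
    have hCcpos : (0:ℝ) < Cc := by linarith
    rw [hε, le_div_iff₀ hdenpos]
    nlinarith [mul_nonneg (mul_nonneg hCcpos.le hδ.le) hδ.le,
      mul_le_mul_of_nonneg_right hC4 hδ.le]
  refine ⟨hε4, fun x hx => ?_⟩
  have hxB : x ∈ Bset n := by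
    have : ∑ i, x i ^ 2 = 1 := hx
    simpa [Bset] using this.le
  have h1 : |vstar x - eval x p| ≤ δ := (hp x hxB).1
  have h2 : |u x - eval x q| ≤ δ := (hq x hxB).1
  rw [hvstarBd x hx] at h1
  rw [huBd x hx] at h2
  have hqabs : |eval x q| ≤ δ := by
    have := h2; rwa [zero_sub, abs_neg] at this
  have hεpos : 0 < ε := by nlinarith
  have key : |(eval x g - (eval x p + ε * eval x q - ε)) - ε| ≤ (1 + ε) * δ := by
    have : (eval x g - (eval x p + ε * eval x q - ε)) - ε
        = (eval x g - eval x p) + (-ε) * eval x q := by ring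
    rw [this]
    calc |(eval x g - eval x p) + (-ε) * eval x q|
        ≤ |eval x g - eval x p| + |(-ε) * eval x q| := abs_add_le _ _
      _ ≤ δ + ε * δ := by
          rw [abs_mul, abs_neg, abs_of_pos hεpos]
          exact add_le_add h1 (by nlinarith [abs_nonneg (eval x q)])
      _ = (1 + ε) * δ := by ring
  refine ⟨key, ?_, ?_⟩
  · have := abs_le.mp key
    nlinarith [this.1]
  · have := abs_le.mp key
    nlinarith [this.1]


end
end
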